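/- arXiv:2311.17714 — 8 statements merged into one kernel-verified Lean document; each statement's English description precedes it below -/
import Mathlib

section
/- Let $g(x) = (\sin(\pi|x|) - \pi(|x|-1)\cos(\pi x))/(2\pi)$ for $|x| \le 1$ and $g(x)=0$ otherwise. Then $g$ is even, non-negative, supported in $[-1,1]$, $g(0) = 1/2$, and its Fourier transform $\hat g(t) = \int_{\mathbb{R}} g(x) e^{-2i\pi x t}\,dx$ equals $\left(\frac{2}{\pi}\frac{\cos \pi t}{1-4t^2}\right)^2$ (with the value $1/4$ at $t = \pm 1/2$). -/
/-!
On `[0, 1]`, writing `v = 1 - u`, one has `2π g(u) = sin (π v) - π v cos (π v)`, which is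
nonnegative because `x cos x ≤ sin x` on `[0, π]`.

Since `g` is even and supported in `[-1, 1]`, its Fourier transform is the cosine transform
`2 ∫₀¹ g(x) cos (2π t x) dx`. Product-to-sum formulas reduce this to the elementary integrals
`∫₀¹ sin (k x)` and `∫₀¹ (1 - x) cos (k x)` at the frequencies `k = π (1 ± 2t)`; at `t = ±1/2`
one of these frequencies vanishes, which gives the separate value `1/4`.
-/

open Real MeasureTheory Set

theorem Function.Odd.integral_eq_zero {G E : Type*} [AddGroup G] [MeasurableSpace G]
    [MeasurableNeg G] [NormedAddCommGroup E] [NormedSpace ℝ E] {μ : Measure G} [μ.IsNegInvariant]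
    {f : G → E} (hf : f.Odd) : ∫ x, f x ∂μ = 0 := by
  have h := integral_neg_eq_self f μ
  rw [funext hf, integral_neg] at h
  linear_combination (norm := module) (-(1 / 2 : ℝ)) • h

theorem Function.Even.integral_ofReal_mul_exp_eq {f : ℝ → ℝ} (hf : f.Even) (hint : Integrable f)
    (t : ℝ) :
    ∫ x : ℝ, (f x : ℂ) * Complex.exp (-(2 * π * Complex.I * x * t)) =
      ((∫ x, f x * cos (2 * π * t * x) : ℝ) : ℂ) := by
  have hexp (x : ℝ) : Complex.exp (-(2 * π * Complex.I * x * t)) =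
      (cos (2 * π * t * x) : ℂ) - (sin (2 * π * t * x) : ℂ) * Complex.I := by
    rw [show -(2 * π * Complex.I * x * t) = ((-(2 * π * t * x) : ℝ) : ℂ) * Complex.I by
        push_cast; ring, Complex.exp_mul_I, ← Complex.ofReal_cos, ← Complex.ofReal_sin,
      cos_neg, sin_neg]
    push_cast; ring
  have hint_mul (u : ℝ → ℝ) (hu : Continuous u) (hbdd : ∀ x, |u x| ≤ 1) :
      Integrable fun x ↦ f x * u x :=
    hint.mul_bdd hu.aestronglyMeasurable (.of_forall hbdd)
  have hodd : (fun x ↦ f x * sin (2 * π * t * x)).Odd := fun x ↦ by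
    simp only [hf x, mul_neg, sin_neg]
  calc ∫ x : ℝ, (f x : ℂ) * Complex.exp (-(2 * π * Complex.I * x * t))
      = ∫ x : ℝ, ((f x * cos (2 * π * t * x) : ℝ) : ℂ)
          - ((f x * sin (2 * π * t * x) : ℝ) : ℂ) * Complex.I := by
        congr 1 with x; rw [hexp]; push_cast; ring
    _ = ((∫ x, f x * cos (2 * π * t * x) : ℝ) : ℂ)
          - ((∫ x, f x * sin (2 * π * t * x) : ℝ) : ℂ) * Complex.I := by
        rw [integral_sub, integral_mul_const, integral_complex_ofReal, integral_complex_ofReal]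
        · exact (hint_mul _ (by fun_prop) fun _ ↦ abs_cos_le_one _).ofReal
        · exact (hint_mul _ (by fun_prop) fun _ ↦ abs_sin_le_one _).ofReal.mul_const _
    _ = ((∫ x, f x * cos (2 * π * t * x) : ℝ) : ℂ) := by
        rw [hodd.integral_eq_zero]; simp

theorem Function.Even.integral_eq_two_mul_intervalIntegral {f : ℝ → ℝ} (hf : f.Even)
    (hint : Integrable f) {a : ℝ} (ha : 0 ≤ a) (hsupp : ∀ x, a < |x| → f x = 0) :
    ∫ x, f x = 2 * ∫ x in (0 : ℝ)..a, f x := by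
  have hsupp' : ∀ x ∉ Icc (-a) a, f x = 0 := fun x hx ↦
    hsupp x (by rw [mem_Icc, ← abs_le, not_le] at hx; exact hx)
  have hleft : ∫ x in -a..0, f x = ∫ x in (0 : ℝ)..a, f x := by
    simpa only [hf _, neg_zero] using (intervalIntegral.integral_comp_neg (a := 0) (b := a) f).symm
  rw [← setIntegral_eq_integral_of_forall_compl_eq_zero hsupp', integral_Icc_eq_integral_Ioc,
    ← intervalIntegral.integral_of_le (by linarith),
    ← intervalIntegral.integral_add_adjacent_intervals (b := 0) hint.intervalIntegrable
      hint.intervalIntegrable, hleft, two_mul]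

theorem mul_cos_le_sin {x : ℝ} (h0 : 0 ≤ x) (hπ : x ≤ π) : x * cos x ≤ sin x := by
  rcases lt_or_ge x (π / 2) with hx | hx
  · have hcos : 0 < cos x := cos_pos_of_mem_Ioo ⟨by linarith [pi_pos], hx⟩
    have := le_tan h0 hx
    rwa [tan_eq_sin_div_cos, le_div_iff₀ hcos] at this
  · have hcos : cos x ≤ 0 := cos_nonpos_of_pi_div_two_le_of_le hx (by linarith)
    nlinarith [sin_nonneg_of_nonneg_of_le_pi h0 hπ]

theorem integral_sin_const_mul {k : ℝ} (hk : k ≠ 0) :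
    ∫ x in (0 : ℝ)..1, sin (k * x) = (1 - cos k) / k := by
  rw [intervalIntegral.integral_comp_mul_left (fun x ↦ sin x) hk, mul_zero, mul_one, integral_sin,
    cos_zero, smul_eq_mul]
  field_simp

theorem integral_one_sub_mul_cos_const_mul {k : ℝ} (hk : k ≠ 0) :
    ∫ x in (0 : ℝ)..1, (1 - x) * cos (k * x) = (1 - cos k) / k ^ 2 := by
  have hderiv (x : ℝ) : HasDerivAt (fun x ↦ (1 - x) * sin (k * x) / k - cos (k * x) / k ^ 2)
      ((1 - x) * cos (k * x)) x := by
    have hkx : HasDerivAt (fun x ↦ k * x) k x := by simpa using (hasDerivAt_id x).const_mul k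
    refine (((((hasDerivAt_id x).const_sub 1).mul hkx.sin).div_const k).sub
      (hkx.cos.div_const (k ^ 2))).congr_deriv ?_
    simp only [id]
    field_simp
    ring
  rw [intervalIntegral.integral_eq_sub_of_hasDerivAt (fun x _ ↦ hderiv x)
    (by apply Continuous.intervalIntegrable; fun_prop)]
  simp only [sub_self, zero_mul, zero_div, mul_zero, sin_zero, cos_zero, mul_one]
  ring

noncomputable def cosConvProfile (u : ℝ) : ℝ := sin (π * u) + π * (1 - u) * cos (π * u)

theorem cosConvProfile_nonneg {u : ℝ} (h0 : 0 ≤ u) (h1 : u ≤ 1) : 0 ≤ cosConvProfile u := by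
  have hsin : sin (π * u) = sin (π * (1 - u)) := by rw [mul_one_sub, sin_pi_sub]
  have hcos : cos (π * u) = -cos (π * (1 - u)) := by rw [mul_one_sub, cos_pi_sub, neg_neg]
  have := mul_cos_le_sin (x := π * (1 - u)) (by nlinarith [pi_pos]) (by nlinarith [pi_pos])
  rw [cosConvProfile, hsin, hcos]
  linarith

theorem integral_cosConvProfile_mul_cos (t : ℝ) :
    ∫ x in (0 : ℝ)..1, cosConvProfile x * cos (2 * π * t * x) =
      ((∫ x in (0 : ℝ)..1, sin (π * (1 + 2 * t) * x)) +
          ∫ x in (0 : ℝ)..1, sin (π * (1 - 2 * t) * x)) / 2 +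
        π / 2 * ((∫ x in (0 : ℝ)..1, (1 - x) * cos (π * (1 + 2 * t) * x)) +
          ∫ x in (0 : ℝ)..1, (1 - x) * cos (π * (1 - 2 * t) * x)) := by
  have hsum (x : ℝ) : cosConvProfile x * cos (2 * π * t * x) =
      (sin (π * (1 + 2 * t) * x) + sin (π * (1 - 2 * t) * x)) / 2 +
        π / 2 * ((1 - x) * cos (π * (1 + 2 * t) * x) + (1 - x) * cos (π * (1 - 2 * t) * x)) := by
    rw [show π * (1 + 2 * t) * x = π * x + 2 * π * t * x by ring,
      show π * (1 - 2 * t) * x = π * x - 2 * π * t * x by ring,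
      sin_add, sin_sub, cos_add, cos_sub, cosConvProfile]
    ring
  simp_rw [hsum]
  rw [intervalIntegral.integral_add, intervalIntegral.integral_div, intervalIntegral.integral_add,
    intervalIntegral.integral_const_mul, intervalIntegral.integral_add]
  all_goals exact Continuous.intervalIntegrable (by fun_prop) 0 1

theorem integral_cosConvProfile_mul_cos_of_ne {t : ℝ} (ht : 1 - 4 * t ^ 2 ≠ 0) :
    ∫ x in (0 : ℝ)..1, cosConvProfile x * cos (2 * π * t * x) =
      4 * cos (π * t) ^ 2 / (π * (1 - 4 * t ^ 2) ^ 2) := by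
  have hfactor : 1 - 4 * t ^ 2 = (1 + 2 * t) * (1 - 2 * t) := by ring
  have hp : 1 + 2 * t ≠ 0 := left_ne_zero_of_mul (hfactor ▸ ht)
  have hq : 1 - 2 * t ≠ 0 := right_ne_zero_of_mul (hfactor ▸ ht)
  have hcos_p : 1 - cos (π * (1 + 2 * t)) = 2 * cos (π * t) ^ 2 := by
    rw [show π * (1 + 2 * t) = 2 * (π * t) + π by ring, cos_add_pi, cos_two_mul]; ring
  have hcos_q : 1 - cos (π * (1 - 2 * t)) = 2 * cos (π * t) ^ 2 := by
    rw [show π * (1 - 2 * t) = π - 2 * (π * t) by ring, cos_pi_sub, cos_two_mul]; ring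
  rw [integral_cosConvProfile_mul_cos, integral_sin_const_mul (by positivity),
    integral_sin_const_mul (by positivity), integral_one_sub_mul_cos_const_mul (by positivity),
    integral_one_sub_mul_cos_const_mul (by positivity), hcos_p, hcos_q, hfactor]
  field_simp
  ring

theorem integral_cosConvProfile_mul_cos_of_eq_half_or_neg_half {t : ℝ}
    (ht : t = 1 / 2 ∨ t = -(1 / 2)) :
    ∫ x in (0 : ℝ)..1, cosConvProfile x * cos (2 * π * t * x) = π / 4 := by
  have h2π : 2 * π ≠ 0 := by positivity
  have hsin_2π : ∫ x in (0 : ℝ)..1, sin (2 * π * x) = 0 := by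
    rw [integral_sin_const_mul h2π, cos_two_pi, sub_self, zero_div]
  have hcos_2π : ∫ x in (0 : ℝ)..1, (1 - x) * cos (2 * π * x) = 0 := by
    rw [integral_one_sub_mul_cos_const_mul h2π, cos_two_pi, sub_self, zero_div]
  have hcos_0 : ∫ x in (0 : ℝ)..1, (1 - x) * cos (0 * x) = 1 / 2 := by
    simp only [zero_mul, cos_zero, mul_one]
    rw [intervalIntegral.integral_comp_sub_left (fun x ↦ x)]
    norm_num [integral_id]
  rw [integral_cosConvProfile_mul_cos]
  rcases ht with rfl | rfl
  · rw [show π * (1 + 2 * (1 / 2)) = 2 * π by ring, show π * (1 - 2 * (1 / 2)) = 0 by ring,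
      hsin_2π, hcos_2π, hcos_0]
    simp only [zero_mul, sin_zero, intervalIntegral.integral_zero]
    ring
  · rw [show π * (1 + 2 * -(1 / 2)) = 0 by ring, show π * (1 - 2 * -(1 / 2)) = 2 * π by ring,
      hsin_2π, hcos_2π, hcos_0]
    simp only [zero_mul, sin_zero, intervalIntegral.integral_zero]
    ring

noncomputable def cosConv (x : ℝ) : ℝ :=
  if |x| ≤ 1 then (sin (π * |x|) - π * (|x| - 1) * cos (π * x)) / (2 * π) else 0

theorem cosConv_even : cosConv.Even := fun x ↦ by
  simp only [cosConv, abs_neg, mul_neg, cos_neg]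

theorem cosConv_of_one_lt_abs {x : ℝ} (hx : 1 < |x|) : cosConv x = 0 :=
  if_neg hx.not_ge

theorem cosConv_of_abs_le_one {x : ℝ} (hx : |x| ≤ 1) :
    cosConv x = cosConvProfile |x| / (2 * π) := by
  rw [cosConv, if_pos hx, cosConvProfile, ← cos_abs (π * x), abs_mul, abs_of_pos pi_pos]
  ring_nf

theorem cosConv_nonneg (x : ℝ) : 0 ≤ cosConv x := by
  rcases le_or_gt |x| 1 with hx | hx
  · rw [cosConv_of_abs_le_one hx]
    exact div_nonneg (cosConvProfile_nonneg (abs_nonneg x) hx) (by positivity)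
  · rw [cosConv_of_one_lt_abs hx]

theorem integrable_cosConv : Integrable cosConv := by
  have hind : cosConv = (Icc (-1) 1).indicator fun x ↦ cosConvProfile |x| / (2 * π) := by
    ext x
    rcases le_or_gt |x| 1 with hx | hx
    · rw [cosConv_of_abs_le_one hx, indicator_of_mem (show x ∈ Icc (-1) 1 from abs_le.mp hx)]
    · rw [cosConv_of_one_lt_abs hx,
        indicator_of_notMem (show x ∉ Icc (-1) 1 from fun h ↦ hx.not_ge (abs_le.mpr h))]
  rw [hind]
  exact (Continuous.integrableOn_Icc (by unfold cosConvProfile; fun_prop)).integrable_indicator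
    measurableSet_Icc

theorem integral_cosConv_mul_exp (t : ℝ) :
    ∫ x : ℝ, (cosConv x : ℂ) * Complex.exp (-(2 * π * Complex.I * x * t)) =
      ((∫ x in (0 : ℝ)..1, cosConvProfile x * cos (2 * π * t * x)) / π : ℝ) := by
  have hcos_even : (fun x ↦ cosConv x * cos (2 * π * t * x)).Even := fun x ↦ by
    simp only [cosConv_even x, mul_neg, cos_neg]
  have hint : Integrable fun x ↦ cosConv x * cos (2 * π * t * x) :=
    integrable_cosConv.mul_bdd (by fun_prop) (.of_forall fun _ ↦ abs_cos_le_one _)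
  rw [cosConv_even.integral_ofReal_mul_exp_eq integrable_cosConv,
    hcos_even.integral_eq_two_mul_intervalIntegral hint zero_le_one
      fun x hx ↦ by rw [cosConv_of_one_lt_abs hx, zero_mul]]
  congr 1
  rw [intervalIntegral.integral_congr
    (g := fun x ↦ cosConvProfile x * cos (2 * π * t * x) / (2 * π)) fun x hx ↦ ?_,
    intervalIntegral.integral_div]
  · field_simp
  · rw [uIcc_of_le zero_le_one] at hx
    rw [cosConv_of_abs_le_one (abs_le.mpr ⟨by linarith [hx.1], hx.2⟩), abs_of_nonneg hx.1]
    ring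

theorem stmt_0 (g : ℝ → ℝ)
    (hg : ∀ x : ℝ, g x =
      if |x| ≤ 1 then (Real.sin (π * |x|) - π * (|x| - 1) * Real.cos (π * x)) / (2 * π)
      else 0) :
    (∀ x : ℝ, g (-x) = g x) ∧
    (∀ x : ℝ, 0 ≤ g x) ∧
    (∀ x : ℝ, 1 < |x| → g x = 0) ∧
    g 0 = 1 / 2 ∧
    (∀ t : ℝ, 1 - 4 * t ^ 2 ≠ 0 →
      ∫ x : ℝ, (g x : ℂ) * Complex.exp (-(2 * π * Complex.I * x * t))
        = ((2 / π * (Real.cos (π * t) / (1 - 4 * t ^ 2))) ^ 2 : ℝ)) ∧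
    (∀ t : ℝ, t = 1 / 2 ∨ t = -(1 / 2) →
      ∫ x : ℝ, (g x : ℂ) * Complex.exp (-(2 * π * Complex.I * x * t)) = 1 / 4) := by
  obtain rfl : g = cosConv := funext hg
  refine ⟨cosConv_even, cosConv_nonneg, fun x ↦ cosConv_of_one_lt_abs, ?_, fun t ht ↦ ?_,
    fun t ht ↦ ?_⟩
  · norm_num [cosConv, div_mul_cancel_right₀ pi_ne_zero]
  · rw [integral_cosConv_mul_exp, integral_cosConvProfile_mul_cos_of_ne ht]
    congr 1
    field_simp
    ring
  · rw [integral_cosConv_mul_exp, integral_cosConvProfile_mul_cos_of_eq_half_or_neg_half ht,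
      div_div_cancel_left' pi_ne_zero]
    norm_num
end

section
/- Let $T > 0$, $(\lambda_k)_{k\in\mathbb{Z}}$ real numbers with $\lambda_{k+1}-\lambda_k \ge 1$, and $(a_k)$ a finitely supported complex sequence. Then $\frac{1}{T}\int_{-T/2}^{T/2} \left|\sum_k a_k e^{2i\pi\lambda_k t}\right|^2 dt \le 2\frac{T+1}{T} \sum_k |a_k|^2$. -/
/-
Majorize the indicator of [-T/2, T/2] by L / (L - T/2) times the tent 1 - |t|/L on [-L, L].
Expanding |f|², the tent-weighted integral is the quadratic form
Σ_{j,k} Re(a_j ā_k) W(2π(λ_j - λ_k)), where W(b) = 2(1 - cos bL)/(L b²) is the Fourier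
transform of the tent: W(0) = L and |W(b)| ≤ 4/(L b²). Since |λ_j - λ_k| ≥ |j - k|, the
off-diagonal coefficients are at most 1/(π² L (j - k)²), and Schur's test with
Σ_{m ≠ 0} 1/m² = π²/3 bounds the form by (L + 1/(3L)) Σ |a_k|². The choice L = T + 1/2 makes
L / (L - T/2) · (L + 1/(3L)) ≤ 2(T + 1).
-/

open Real MeasureTheory Finset
open ComplexConjugate

section SymmetricIntegrals

variable {E : Type*} [NormedAddCommGroup E] [NormedSpace ℝ E] {g : ℝ → E}

lemma intervalIntegral.integral_neg_self_eq_zero_of_odd (hg : Function.Odd g) (L : ℝ) :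
    ∫ t in -L..L, g t = 0 := by
  have h := intervalIntegral.integral_comp_neg (a := -L) (b := L) g
  simp only [neg_neg, hg _, intervalIntegral.integral_neg] at h
  have h2 : (2 : ℝ) • ∫ t in -L..L, g t = 0 := by
    rw [two_smul]; nth_rewrite 1 [← h]; exact neg_add_cancel _
  simpa using h2

lemma intervalIntegral.integral_neg_self_eq_two_smul_of_even (hg : Function.Even g) {L : ℝ}
    (hint : IntervalIntegrable g volume (-L) L) :
    ∫ t in -L..L, g t = (2 : ℝ) • ∫ t in 0..L, g t := by
  have hneg : ∫ t in -L..0, g t = ∫ t in 0..L, g t := by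
    simpa [hg _] using (intervalIntegral.integral_comp_neg (a := 0) (b := L) g).symm
  have h0 : (0 : ℝ) ∈ Set.uIcc (-L) L := by
    simp only [Set.mem_uIcc, neg_nonpos, neg_nonneg]
    exact (le_total 0 L).imp (fun h => ⟨h, h⟩) fun h => ⟨h, h⟩
  rw [← intervalIntegral.integral_add_adjacent_intervals (b := 0)
    (hint.mono_set (Set.uIcc_subset_uIcc_left h0)) (hint.mono_set (Set.uIcc_subset_uIcc_right h0)),
    hneg, two_smul]

end SymmetricIntegrals

noncomputable def tentTransform (L b : ℝ) : ℝ :=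
  if b = 0 then L else 2 * (1 - cos (b * L)) / (L * b ^ 2)

lemma integral_one_sub_div_mul_cos {L : ℝ} (hL : 0 < L) (b : ℝ) :
    ∫ t in 0..L, (1 - t / L) * cos (b * t) = tentTransform L b / 2 := by
  rw [tentTransform]
  split_ifs with hb
  · subst hb
    simp only [zero_mul, cos_zero, mul_one]
    rw [intervalIntegral.integral_sub intervalIntegrable_const
      (Continuous.intervalIntegrable (by fun_prop) _ _), intervalIntegral.integral_div, integral_id,
      intervalIntegral.integral_const]
    field_simp
    ring
  · have hderiv : ∀ t ∈ Set.uIcc 0 L, HasDerivAt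
        (fun t => (1 - t / L) * sin (b * t) / b - cos (b * t) / (L * b ^ 2))
        ((1 - t / L) * cos (b * t)) t := by
      intro t _
      have h := ((((hasDerivAt_id t).div_const L).const_sub 1).mul
        ((hasDerivAt_id t).const_mul b).sin).div_const b |>.sub
        (((hasDerivAt_id t).const_mul b).cos.div_const (L * b ^ 2))
      refine h.congr_deriv ?_
      simp only [id]
      field_simp
      ring
    rw [intervalIntegral.integral_eq_sub_of_hasDerivAt hderiv
      (Continuous.intervalIntegrable (by fun_prop) _ _)]
    simp only [zero_div, sub_zero, mul_zero, sin_zero, cos_zero]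
    field_simp
    ring

lemma integral_tent_mul_cos {L : ℝ} (hL : 0 < L) (b : ℝ) :
    ∫ t in -L..L, (1 - |t| / L) * cos (b * t) = tentTransform L b := by
  have heven : Function.Even fun t : ℝ => (1 - |t| / L) * cos (b * t) := fun t => by
    simp only [abs_neg, mul_neg, cos_neg]
  rw [intervalIntegral.integral_neg_self_eq_two_smul_of_even heven
      (Continuous.intervalIntegrable (by fun_prop) _ _),
    intervalIntegral.integral_congr (g := fun t => (1 - t / L) * cos (b * t)),
    integral_one_sub_div_mul_cos hL, smul_eq_mul, mul_div_cancel₀ _ two_ne_zero]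
  intro t ht
  rw [Set.uIcc_of_le hL.le] at ht
  simp only [abs_of_nonneg ht.1]

lemma integral_tent_mul_sin (L b : ℝ) :
    ∫ t in -L..L, (1 - |t| / L) * sin (b * t) = 0 :=
  intervalIntegral.integral_neg_self_eq_zero_of_odd
    (fun t => by simp only [abs_neg, mul_neg, sin_neg]) L

lemma abs_tentTransform_le {b : ℝ} (hb : b ≠ 0) (L : ℝ) :
    |tentTransform L b| ≤ 4 / (|L| * b ^ 2) := by
  rw [tentTransform, if_neg hb]
  simp only [abs_div, abs_mul, abs_two, abs_of_nonneg (sq_nonneg b)]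
  gcongr
  rw [abs_of_nonneg (sub_nonneg.mpr (cos_le_one _))]
  linarith [neg_one_le_cos (b * L)]

lemma norm_sum_mul_exp_sq {ι : Type*} (s : Finset ι) (a : ι → ℂ) (θ : ι → ℝ) :
    ‖∑ k ∈ s, a k * Complex.exp (θ k * Complex.I)‖ ^ 2 =
      ∑ j ∈ s, ∑ k ∈ s, ((a j * conj (a k)).re * cos (θ j - θ k)
        - (a j * conj (a k)).im * sin (θ j - θ k)) := by
  have hterm : ∀ j k,
      a j * Complex.exp (θ j * Complex.I) * conj (a k * Complex.exp (θ k * Complex.I))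
        = a j * conj (a k) * Complex.exp ((θ j - θ k : ℝ) * Complex.I) := fun j k => by
    rw [map_mul, ← Complex.exp_conj, Complex.ofReal_sub, sub_mul, Complex.exp_sub]
    simp only [map_mul, Complex.conj_ofReal, Complex.conj_I, mul_neg, Complex.exp_neg]
    ring
  rw [← Complex.ofReal_re (‖_‖ ^ 2), Complex.ofReal_pow, ← Complex.mul_conj', map_sum,
    sum_mul_sum, Complex.re_sum]
  simp only [hterm, Complex.re_sum, Complex.mul_re, Complex.exp_ofReal_mul_I_re,
    Complex.exp_ofReal_mul_I_im]

lemma integral_tent_mul_norm_sum_sq {ι : Type*} {L : ℝ} (hL : 0 < L) (s : Finset ι)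
    (a : ι → ℂ) (μ : ι → ℝ) :
    ∫ t in -L..L,
        (1 - |t| / L) * ‖∑ k ∈ s, a k * Complex.exp ((μ k * t : ℝ) * Complex.I)‖ ^ 2 =
      ∑ j ∈ s, ∑ k ∈ s, (a j * conj (a k)).re * tentTransform L (μ j - μ k) := by
  simp only [norm_sum_mul_exp_sq, ← sub_mul, mul_sum, mul_sub, mul_left_comm (1 - |_| / L)]
  rw [intervalIntegral.integral_finsetSum fun j _ =>
    Continuous.intervalIntegrable (by fun_prop) _ _]
  refine sum_congr rfl fun j _ => ?_
  rw [intervalIntegral.integral_finsetSum fun k _ =>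
    Continuous.intervalIntegrable (by fun_prop) _ _]
  refine sum_congr rfl fun k _ => ?_
  rw [intervalIntegral.integral_sub (Continuous.intervalIntegrable (by fun_prop) _ _)
      (Continuous.intervalIntegrable (by fun_prop) _ _), intervalIntegral.integral_const_mul,
    intervalIntegral.integral_const_mul, integral_tent_mul_cos hL, integral_tent_mul_sin, mul_zero,
    sub_zero]

lemma integral_le_mul_integral_tent {F : ℝ → ℝ} {c L : ℝ} (hc : 0 ≤ c) (hcL : c < L)
    (hF : IntervalIntegrable F volume (-L) L) (hF0 : ∀ t, 0 ≤ F t) :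
    ∫ t in -c..c, F t ≤ L / (L - c) * ∫ t in -L..L, (1 - |t| / L) * F t := by
  have hL : 0 < L := hc.trans_lt hcL
  have hwF : IntervalIntegrable (fun t => (1 - |t| / L) * F t) volume (-L) L :=
    hF.continuousOn_mul (by fun_prop)
  have hsub : Set.uIcc (-c) c ⊆ Set.uIcc (-L) L :=
    Set.uIcc_subset_uIcc (Set.mem_uIcc_of_le (by linarith) (by linarith))
      (Set.mem_uIcc_of_le (by linarith) (by linarith))
  have hweight : ∀ t ∈ Set.Icc (-c) c, 1 ≤ L / (L - c) * (1 - |t| / L) := fun t ht => by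
    have : |t| ≤ c := abs_le.mpr ht
    rw [one_sub_div hL.ne', div_mul_div_comm, le_div_iff₀ (mul_pos (by linarith) hL)]
    nlinarith
  calc ∫ t in -c..c, F t ≤ ∫ t in -c..c, L / (L - c) * ((1 - |t| / L) * F t) :=
        intervalIntegral.integral_mono_on (by linarith) (hF.mono_set hsub)
          ((hwF.mono_set hsub).const_mul _) fun t ht => by
            rw [← mul_assoc]; exact le_mul_of_one_le_left (hF0 t) (hweight t ht)
    _ = L / (L - c) * ∫ t in -c..c, (1 - |t| / L) * F t := intervalIntegral.integral_const_mul _ _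
    _ ≤ L / (L - c) * ∫ t in -L..L, (1 - |t| / L) * F t := by
        refine mul_le_mul_of_nonneg_left ?_ (div_nonneg hL.le (by linarith))
        refine intervalIntegral.integral_mono_interval (by linarith) (by linarith) (by linarith)
          ?_ hwF
        refine (ae_restrict_iff' measurableSet_Ioc).mpr (ae_of_all _ fun t ht => ?_)
        have : |t| / L ≤ 1 := (div_le_one hL).mpr (abs_le.mpr ⟨ht.1.le, ht.2⟩)
        exact mul_nonneg (by linarith) (hF0 t)

lemma hasSum_int_inv_sq : HasSum (fun m : ℤ => ((m : ℝ) ^ 2)⁻¹) (π ^ 2 / 3) := by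
  have h := hasSum_zeta_two.of_nat_of_neg (f := fun m : ℤ => 1 / (m : ℝ) ^ 2)
    (by simpa using hasSum_zeta_two)
  rw [show π ^ 2 / 3 = π ^ 2 / 6 + π ^ 2 / 6 - 1 / ((0 : ℤ) : ℝ) ^ 2 by simp; ring]
  simpa only [one_div] using h

lemma sum_inv_sub_sq_le (s : Finset ℤ) (j : ℤ) :
    ∑ k ∈ s, (((j : ℝ) - k) ^ 2)⁻¹ ≤ π ^ 2 / 3 := by
  have hinj : Set.InjOn (fun k : ℤ => j - k) s := fun _ _ _ _ h => by simpa using h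
  calc ∑ k ∈ s, (((j : ℝ) - k) ^ 2)⁻¹
      = ∑ m ∈ s.image (j - ·), ((m : ℝ) ^ 2)⁻¹ := by rw [sum_image hinj]; push_cast; rfl
    _ ≤ π ^ 2 / 3 := sum_le_hasSum _ (fun _ _ => by positivity) hasSum_int_inv_sq

lemma sum_sum_mul_mul_le_of_sum_le {ι : Type*} (s : Finset ι) (x : ι → ℝ)
    {K : ι → ι → ℝ} (hK : ∀ j k, 0 ≤ K j k) (hsymm : ∀ j k, K j k = K k j) {C : ℝ}
    (hrow : ∀ j ∈ s, ∑ k ∈ s, K j k ≤ C) :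
    ∑ j ∈ s, ∑ k ∈ s, x j * x k * K j k ≤ C * ∑ j ∈ s, x j ^ 2 := by
  have hhalf : ∑ j ∈ s, ∑ k ∈ s, x j ^ 2 * K j k ≤ C * ∑ j ∈ s, x j ^ 2 := by
    rw [mul_sum]
    refine sum_le_sum fun j hj => ?_
    rw [← mul_sum, mul_comm]
    exact mul_le_mul_of_nonneg_right (hrow j hj) (sq_nonneg _)
  have hswap :
      ∑ j ∈ s, ∑ k ∈ s, x k ^ 2 * K j k = ∑ j ∈ s, ∑ k ∈ s, x j ^ 2 * K j k := by
    rw [sum_comm]; simp only [hsymm]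
  calc ∑ j ∈ s, ∑ k ∈ s, x j * x k * K j k
      ≤ ∑ j ∈ s, ∑ k ∈ s, (x j ^ 2 * K j k + x k ^ 2 * K j k) / 2 :=
        sum_le_sum fun j _ => sum_le_sum fun k _ => by
          nlinarith [mul_nonneg (sq_nonneg (x j - x k)) (hK j k)]
    _ ≤ C * ∑ j ∈ s, x j ^ 2 := by
        simp only [← sum_div, sum_add_distrib, hswap]
        linarith

lemma sub_le_sub_of_separated {lam : ℤ → ℝ} (hlam : ∀ k : ℤ, lam (k + 1) - lam k ≥ 1)
    {j k : ℤ} (hjk : j ≤ k) : (k : ℝ) - j ≤ lam k - lam j := by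
  induction k, hjk using Int.leInduction with
  | base => simp
  | succ n _ ih => push_cast; linarith [hlam n]

lemma sq_sub_le_sq_sub_of_separated {lam : ℤ → ℝ}
    (hlam : ∀ k : ℤ, lam (k + 1) - lam k ≥ 1) (j k : ℤ) :
    ((j : ℝ) - k) ^ 2 ≤ (lam j - lam k) ^ 2 := by
  wlog hjk : j ≤ k generalizing j k
  · have := this k j (le_of_not_ge hjk)
    rwa [← neg_sub, neg_sq, ← neg_sub (lam j), neg_sq] at this
  have := sub_le_sub_of_separated hlam hjk
  have : (j : ℝ) ≤ k := by exact_mod_cast hjk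
  nlinarith

-- On the diagonal the second summand vanishes, since `(0 : ℝ)⁻¹ = 0`.
lemma abs_tentTransform_le_of_separated {L : ℝ} (hL : 0 < L) {lam : ℤ → ℝ}
    (hlam : ∀ k : ℤ, lam (k + 1) - lam k ≥ 1) (j k : ℤ) :
    |tentTransform L (2 * π * lam j - 2 * π * lam k)|
      ≤ (if j = k then L else 0) + (π ^ 2 * L)⁻¹ * (((j : ℝ) - k) ^ 2)⁻¹ := by
  rcases eq_or_ne j k with rfl | hjk
  · simp [tentTransform, abs_of_pos hL]
  have hjk' : (1 : ℝ) ≤ ((j : ℝ) - k) ^ 2 := by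
    have : (1 : ℤ) ≤ (j - k) ^ 2 := by
      nlinarith [Int.one_le_abs (sub_ne_zero.mpr hjk), sq_abs (j - k)]
    exact_mod_cast this
  have hb : (2 * π * lam j - 2 * π * lam k) ^ 2 = 4 * π ^ 2 * (lam j - lam k) ^ 2 := by ring
  have hsep := sq_sub_le_sq_sub_of_separated hlam j k
  have hb_pos : 0 < (2 * π * lam j - 2 * π * lam k) ^ 2 := by
    have : 0 < (lam j - lam k) ^ 2 := by linarith
    rw [hb]; positivity
  calc |tentTransform L (2 * π * lam j - 2 * π * lam k)|
      ≤ 4 / (|L| * (2 * π * lam j - 2 * π * lam k) ^ 2) :=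
        abs_tentTransform_le ((pow_ne_zero_iff two_ne_zero).mp hb_pos.ne') L
    _ ≤ 4 / (L * (4 * π ^ 2 * ((j : ℝ) - k) ^ 2)) := by
        rw [abs_of_pos hL, hb]; gcongr
    _ = (if j = k then L else 0) + (π ^ 2 * L)⁻¹ * (((j : ℝ) - k) ^ 2)⁻¹ := by
        rw [if_neg hjk, zero_add]; field_simp

lemma sum_sum_re_mul_tentTransform_le {L : ℝ} (hL : 0 < L) {lam : ℤ → ℝ}
    (hlam : ∀ k : ℤ, lam (k + 1) - lam k ≥ 1) (s : Finset ℤ) (a : ℤ → ℂ) :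
    ∑ j ∈ s, ∑ k ∈ s,
        (a j * conj (a k)).re * tentTransform L (2 * π * lam j - 2 * π * lam k)
      ≤ (L + 1 / (3 * L)) * ∑ k ∈ s, ‖a k‖ ^ 2 := by
  set K : ℤ → ℤ → ℝ := fun j k =>
    (if j = k then L else 0) + (π ^ 2 * L)⁻¹ * (((j : ℝ) - k) ^ 2)⁻¹
  have hK : ∀ j k, 0 ≤ K j k := fun j k => by
    have := hL.le
    simp only [K]; split_ifs <;> positivity
  have hsymm : ∀ j k, K j k = K k j := fun j k => by
    simp only [K, eq_comm (a := j), ← neg_sub (k : ℝ), neg_sq]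
  have hrow : ∀ j ∈ s, ∑ k ∈ s, K j k ≤ L + 1 / (3 * L) := fun j hj => by
    simp only [K, sum_add_distrib, sum_ite_eq, if_pos hj, ← mul_sum]
    calc L + (π ^ 2 * L)⁻¹ * ∑ k ∈ s, (((j : ℝ) - k) ^ 2)⁻¹
        ≤ L + (π ^ 2 * L)⁻¹ * (π ^ 2 / 3) := by gcongr; exact sum_inv_sub_sq_le s j
      _ = L + 1 / (3 * L) := by field_simp
  calc ∑ j ∈ s, ∑ k ∈ s,
        (a j * conj (a k)).re * tentTransform L (2 * π * lam j - 2 * π * lam k)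
      ≤ ∑ j ∈ s, ∑ k ∈ s, ‖a j‖ * ‖a k‖ * K j k := by
        refine sum_le_sum fun j _ => sum_le_sum fun k _ => ?_
        calc (a j * conj (a k)).re * tentTransform L (2 * π * lam j - 2 * π * lam k)
            ≤ |(a j * conj (a k)).re| * |tentTransform L (2 * π * lam j - 2 * π * lam k)| := by
              rw [← abs_mul]; exact le_abs_self _
          _ ≤ ‖a j‖ * ‖a k‖ * K j k := by
              have := Complex.abs_re_le_norm (a j * conj (a k))
              rw [norm_mul, Complex.norm_conj] at this
              exact mul_le_mul this (abs_tentTransform_le_of_separated hL hlam j k)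
                (abs_nonneg _) (by positivity)
    _ ≤ (L + 1 / (3 * L)) * ∑ k ∈ s, ‖a k‖ ^ 2 :=
        sum_sum_mul_mul_le_of_sum_le s _ hK hsymm hrow

theorem stmt_2 (T : ℝ) (hT : 0 < T)
    (lam : ℤ → ℝ) (hlam : ∀ k : ℤ, lam (k + 1) - lam k ≥ 1)
    (s : Finset ℤ) (a : ℤ → ℂ) :
    (1 / T) * ∫ t in (-(T / 2))..(T / 2),
        ‖∑ k ∈ s, a k * Complex.exp (2 * π * Complex.I * lam k * t)‖ ^ 2
      ≤ 2 * ((T + 1) / T) * ∑ k ∈ s, ‖a k‖ ^ 2 := by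
  set L := T + 1 / 2 with hL_def
  have hL : 0 < L := by positivity
  set F : ℝ → ℝ := fun t =>
    ‖∑ k ∈ s, a k * Complex.exp ((2 * π * lam k * t : ℝ) * Complex.I)‖ ^ 2
  have hF : ∀ t : ℝ,
      ‖∑ k ∈ s, a k * Complex.exp (2 * π * Complex.I * lam k * t)‖ ^ 2 = F t :=
    fun t => congrArg (‖·‖ ^ 2) (sum_congr rfl fun k _ => by push_cast; ring_nf)
  have hcompare := integral_le_mul_integral_tent (F := F) (c := T / 2) (L := L) (by positivity)
    (by linarith) (Continuous.intervalIntegrable (by fun_prop) _ _) (fun t => by positivity)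
  rw [integral_tent_mul_norm_sum_sq hL s a (fun k => 2 * π * lam k)] at hcompare
  have hconst : L / (L - T / 2) * (L + 1 / (3 * L)) ≤ 2 * (T + 1) := by
    rw [hL_def, div_mul_eq_mul_div, div_le_iff₀ (by linarith)]
    field_simp
    nlinarith
  have hintegral : ∫ t in (-(T / 2))..(T / 2), F t
      ≤ L / (L - T / 2) * (L + 1 / (3 * L)) * ∑ k ∈ s, ‖a k‖ ^ 2 := by
    rw [mul_assoc]
    exact hcompare.trans (mul_le_mul_of_nonneg_left
      (sum_sum_re_mul_tentTransform_le hL hlam s a) (div_nonneg hL.le (by linarith)))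
  simp only [hF]
  calc (1 / T) * ∫ t in (-(T / 2))..(T / 2), F t
      ≤ (1 / T) * (2 * (T + 1) * ∑ k ∈ s, ‖a k‖ ^ 2) := by
        gcongr
        exact hintegral.trans (by gcongr)
    _ = 2 * ((T + 1) / T) * ∑ k ∈ s, ‖a k‖ ^ 2 := by ring
end

section
/- Let $T \ge 2$, $(\lambda_k)_{k\in\mathbb{Z}}$ real numbers with $\lambda_{k+1}-\lambda_k \ge 1$, and $(a_k)$ a finitely supported complex sequence. Then $\frac{1}{T}\int_{-T/2}^{T/2}\left|\sum_k a_k e^{2i\pi\lambda_k t}\right|^2 dt \ge \frac{\pi^2}{64}\sum_k |a_k|^2$. -/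
/-!
Ingham's weight method. On `[-T/2, T/2]` the indicator function dominates the window
`cos (π t / T)`, so it suffices to bound `∫ cos (π t / T) |f t|²` from below. Expanding `|f|²`
turns this integral into the quadratic form `∑ a_j conj a_k W(λ_j - λ_k)`, where
`W ξ = 2 T cos (π T ξ) / (π (1 - 4 T² ξ²))` is the Fourier transform of the window. The diagonal
gives `(2 T / π) ∑ |a_k|²`; off the diagonal `|W(λ_j - λ_k)| ≲ 1 / (T (j - k)²)` by the gap
condition, and a Schur test with `∑_{n ≠ 0} 1 / n² = π² / 3` makes these terms a small multiple
of `∑ |a_k|²` once `T ≥ 2`.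
-/

open Real MeasureTheory Finset ComplexConjugate

theorem integral_cexp_ofReal_mul_I {c : ℝ} (hc : c ≠ 0) (L : ℝ) :
    ∫ t in -L..L, Complex.exp (c * t * Complex.I) = ((2 * Real.sin (c * L) / c : ℝ) : ℂ) := by
  have hcI : (c : ℂ) * Complex.I ≠ 0 := by simp [hc]
  simp_rw [mul_right_comm _ _ Complex.I]
  rw [integral_exp_mul_complex hcI]
  simp only [mul_right_comm _ Complex.I, ← Complex.ofReal_mul, Complex.exp_mul_I,
    Complex.ofReal_neg, mul_neg, Complex.cos_neg, Complex.sin_neg]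
  push_cast
  field_simp
  ring

theorem integral_mul_norm_sum_cexp_sq {ι : Type*} (s : Finset ι) (c : ι → ℂ) (lam : ι → ℝ)
    {w : ℝ → ℝ} {a b : ℝ} (hw : IntervalIntegrable w volume a b) :
    ∫ t in a..b, w t * ‖∑ k ∈ s, c k * Complex.exp (2 * π * Complex.I * lam k * t)‖ ^ 2
      = (∑ j ∈ s, ∑ k ∈ s, c j * conj (c k) * ∫ t in a..b,
          (w t : ℂ) * Complex.exp (2 * π * Complex.I * ((lam j - lam k : ℝ) : ℂ) * t)).re := by
  have hpoint : ∀ t : ℝ,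
      ((w t * ‖∑ k ∈ s, c k * Complex.exp (2 * π * Complex.I * lam k * t)‖ ^ 2 : ℝ) : ℂ)
        = ∑ j ∈ s, ∑ k ∈ s, c j * conj (c k) *
          ((w t : ℂ) * Complex.exp (2 * π * Complex.I * ((lam j - lam k : ℝ) : ℂ) * t)) := by
    intro t
    have hexp : ∀ j k, Complex.exp (2 * π * Complex.I * ((lam j - lam k : ℝ) : ℂ) * t)
        = Complex.exp (2 * π * Complex.I * lam j * t)
          * conj (Complex.exp (2 * π * Complex.I * lam k * t)) := fun j k => by
      rw [← Complex.exp_conj, ← Complex.exp_add]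
      congr 1
      simp only [map_mul, Complex.conj_ofReal, Complex.conj_I, map_ofNat]
      push_cast
      ring
    rw [Complex.ofReal_mul, Complex.ofReal_pow, ← Complex.mul_conj', map_sum, sum_mul_sum,
      mul_sum]
    refine sum_congr rfl fun j _ => ?_
    rw [mul_sum]
    refine sum_congr rfl fun k _ => ?_
    rw [hexp, map_mul]
    ring
  have hint : ∀ j k, IntervalIntegrable (fun t : ℝ =>
      (w t : ℂ) * Complex.exp (2 * π * Complex.I * ((lam j - lam k : ℝ) : ℂ) * t)) volume a b :=
    fun j k => IntervalIntegrable.mul_continuousOn ⟨hw.1.ofReal, hw.2.ofReal⟩ (by fun_prop)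
  have hrow : ∀ j, ∫ t in a..b, ∑ k ∈ s, c j * conj (c k) *
        ((w t : ℂ) * Complex.exp (2 * π * Complex.I * ((lam j - lam k : ℝ) : ℂ) * t))
      = ∑ k ∈ s, c j * conj (c k) * ∫ t in a..b,
          (w t : ℂ) * Complex.exp (2 * π * Complex.I * ((lam j - lam k : ℝ) : ℂ) * t) :=
    fun j => by
      rw [intervalIntegral.integral_finsetSum fun k _ => (hint j k).const_mul _]
      simp only [intervalIntegral.integral_const_mul]
  rw [← Complex.ofReal_re (∫ t in a..b, _), ← intervalIntegral.integral_ofReal,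
    intervalIntegral.integral_congr fun t _ => hpoint t,
    intervalIntegral.integral_finsetSum fun j _ => by
      simpa only [← sum_fn] using IntervalIntegrable.sum s fun k _ =>
        (hint j k).const_mul (c j * conj (c k))]
  simp only [hrow]

noncomputable def cosWindowTransform (T ξ : ℝ) : ℂ :=
  ∫ t in -(T / 2)..T / 2, (Real.cos (π / T * t) : ℂ) * Complex.exp (2 * π * Complex.I * ξ * t)

theorem cosWindowTransform_eq {T : ℝ} (hT : 0 < T) {ξ : ℝ} (hξ : (2 * T * ξ) ^ 2 ≠ 1) :
    cosWindowTransform T ξ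
      = ((2 * T * Real.cos (π * T * ξ) / (π * (1 - (2 * T * ξ) ^ 2)) : ℝ) : ℂ) := by
  have hπ := Real.pi_pos
  have hfactor : (2 * T * ξ + 1) * (2 * T * ξ - 1) ≠ 0 := by
    intro h; apply hξ; linear_combination h
  obtain ⟨hne_plus, hne_minus⟩ := mul_ne_zero_iff.mp hfactor
  have hplus : 2 * π * ξ + π / T ≠ 0 := by
    rw [show 2 * π * ξ + π / T = π * (2 * T * ξ + 1) / T by field_simp]
    exact div_ne_zero (mul_ne_zero hπ.ne' hne_plus) hT.ne'
  have hminus : 2 * π * ξ - π / T ≠ 0 := by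
    rw [show 2 * π * ξ - π / T = π * (2 * T * ξ - 1) / T by field_simp]
    exact div_ne_zero (mul_ne_zero hπ.ne' hne_minus) hT.ne'
  have hsplit : ∀ t : ℝ, (Real.cos (π / T * t) : ℂ) * Complex.exp (2 * π * Complex.I * ξ * t)
      = (Complex.exp (((2 * π * ξ + π / T : ℝ) : ℂ) * t * Complex.I)
        + Complex.exp (((2 * π * ξ - π / T : ℝ) : ℂ) * t * Complex.I)) / 2 := by
    intro t
    rw [Complex.ofReal_cos, Complex.cos, div_mul_eq_mul_div, add_mul, ← Complex.exp_add,
      ← Complex.exp_add]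
    congr 3 <;> push_cast <;> ring
  have hcont : ∀ c : ℝ, Continuous fun t : ℝ => Complex.exp (c * t * Complex.I) := fun c => by
    fun_prop
  have hsin_plus : Real.sin ((2 * π * ξ + π / T) * (T / 2)) = Real.cos (π * T * ξ) := by
    rw [← Real.sin_add_pi_div_two]; congr 1; field_simp
  have hsin_minus : Real.sin ((2 * π * ξ - π / T) * (T / 2)) = - Real.cos (π * T * ξ) := by
    rw [← Real.sin_sub_pi_div_two]; congr 1; field_simp
  rw [cosWindowTransform, intervalIntegral.integral_congr (fun t _ => hsplit t),
    intervalIntegral.integral_div, intervalIntegral.integral_add ((hcont _).intervalIntegrable _ _)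
    ((hcont _).intervalIntegrable _ _), integral_cexp_ofReal_mul_I hplus,
    integral_cexp_ofReal_mul_I hminus, hsin_plus, hsin_minus]
  have hden : 1 - (2 * T * ξ) ^ 2 ≠ 0 := sub_ne_zero.mpr (Ne.symm hξ)
  norm_cast
  field_simp
  rw [eq_div_iff (by rwa [mul_pow, mul_pow] at hden)]
  ring

theorem cosWindowTransform_zero {T : ℝ} (hT : 0 < T) :
    cosWindowTransform T 0 = ((2 * T / π : ℝ) : ℂ) := by
  rw [cosWindowTransform_eq hT (by norm_num)]
  simp

theorem norm_cosWindowTransform_le {T ξ : ℝ} (hT : 0 < T) (hξ : 2 ≤ T * |ξ|) :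
    ‖cosWindowTransform T ξ‖ ≤ 8 / (15 * π * T * ξ ^ 2) := by
  have hπ := Real.pi_pos
  have hTξ : 4 ≤ T ^ 2 * ξ ^ 2 := by nlinarith [sq_abs ξ, abs_nonneg ξ]
  rw [cosWindowTransform_eq hT (by nlinarith), Complex.norm_real, Real.norm_eq_abs, abs_div,
    abs_mul, abs_of_pos (by positivity : 0 < 2 * T),
    abs_of_neg (by nlinarith : π * (1 - (2 * T * ξ) ^ 2) < 0)]
  have hξ0 : 0 < ξ ^ 2 := by nlinarith
  rw [div_le_div_iff₀ (by nlinarith) (by positivity)]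
  calc 2 * T * |Real.cos (π * T * ξ)| * (15 * π * T * ξ ^ 2)
      ≤ 2 * T * 1 * (15 * π * T * ξ ^ 2) := by gcongr; exact Real.abs_cos_le_one _
    _ ≤ 8 * -(π * (1 - (2 * T * ξ) ^ 2)) := by nlinarith

-- The term `n = 0` is `1 / 0 = 0`.
theorem hasSum_one_div_int_sq : HasSum (fun n : ℤ => 1 / (n : ℝ) ^ 2) (π ^ 2 / 3) := by
  have hpos : HasSum (fun n : ℕ => 1 / ((n : ℝ) + 1) ^ 2) (π ^ 2 / 6) := by
    have := (hasSum_nat_add_iff' 1).mpr hasSum_zeta_two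
    simpa using this
  have hneg : HasSum (fun n : ℕ => 1 / (((-(n + 1) : ℤ)) : ℝ) ^ 2) (π ^ 2 / 6) := by
    refine hpos.congr_fun fun n => ?_
    push_cast; ring
  have := hasSum_zeta_two.of_nat_of_neg_add_one (f := fun n : ℤ => 1 / (n : ℝ) ^ 2) hneg
  convert this using 1
  ring

theorem sum_erase_one_div_sub_sq_le (s : Finset ℤ) (j : ℤ) :
    ∑ k ∈ s.erase j, 1 / ((j : ℝ) - k) ^ 2 ≤ π ^ 2 / 3 := by
  have h : HasSum (fun k : ℤ => 1 / ((j : ℝ) - k) ^ 2) (π ^ 2 / 3) := by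
    have := (Equiv.subLeft j).hasSum_iff.mpr hasSum_one_div_int_sq
    simpa [Function.comp_def] using this
  exact sum_le_hasSum _ (fun _ _ => by positivity) h

theorem sum_sum_erase_mul_mul_le {ι : Type*} [DecidableEq ι] (s : Finset ι) (x : ι → ℝ)
    {K : ι → ι → ℝ} (hK : ∀ j k, 0 ≤ K j k) (hKsymm : ∀ j k, K j k = K k j) {C : ℝ}
    (hrow : ∀ j ∈ s, ∑ k ∈ s.erase j, K j k ≤ C) :
    ∑ j ∈ s, ∑ k ∈ s.erase j, x j * x k * K j k ≤ C * ∑ j ∈ s, x j ^ 2 := by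
  have hswap : ∑ j ∈ s, ∑ k ∈ s.erase j, x k ^ 2 * K j k
      = ∑ j ∈ s, ∑ k ∈ s.erase j, x j ^ 2 * K j k := by
    rw [sum_comm' (t' := s) (s' := fun k => s.erase k)]
    · simp only [hKsymm]
    · intro j k; simp only [mem_erase]; tauto
  have hrow' : ∀ j ∈ s, ∑ k ∈ s.erase j, x j ^ 2 * K j k ≤ C * x j ^ 2 := fun j hj => by
    rw [← mul_sum, mul_comm]; exact mul_le_mul_of_nonneg_right (hrow j hj) (sq_nonneg _)
  calc ∑ j ∈ s, ∑ k ∈ s.erase j, x j * x k * K j k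
      ≤ ∑ j ∈ s, ∑ k ∈ s.erase j, (x j ^ 2 * K j k + x k ^ 2 * K j k) / 2 := by
        gcongr with j _ k _
        nlinarith [hK j k, mul_nonneg (hK j k) (sq_nonneg (x j - x k))]
    _ = ∑ j ∈ s, ∑ k ∈ s.erase j, x j ^ 2 * K j k := by
        simp only [← sum_div, sum_add_distrib, hswap]; ring
    _ ≤ C * ∑ j ∈ s, x j ^ 2 := by rw [mul_sum]; exact sum_le_sum hrow'

theorem abs_intCast_sub_le_abs_sub {lam : ℤ → ℝ} (hlam : ∀ k : ℤ, lam (k + 1) - lam k ≥ 1)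
    (j k : ℤ) : |(j : ℝ) - k| ≤ |lam j - lam k| := by
  wlog hkj : k ≤ j generalizing j k
  · rw [abs_sub_comm, abs_sub_comm (lam j)]
    exact this k j (le_of_not_ge hkj)
  have hmono : Monotone fun k : ℤ => lam k - k :=
    monotone_int_of_le_succ fun k => by push_cast; linarith [hlam k]
  have hsep : (j : ℝ) - k ≤ lam j - lam k := by linarith [hmono hkj]
  have hnonneg : (0 : ℝ) ≤ j - k := by simpa using hkj
  exact abs_le_abs hsep (by linarith)

theorem norm_cosWindowTransform_sub_le {T : ℝ} (hT : 2 ≤ T) {lam : ℤ → ℝ}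
    (hlam : ∀ k : ℤ, lam (k + 1) - lam k ≥ 1) {j k : ℤ} (hjk : j ≠ k) :
    ‖cosWindowTransform T (lam j - lam k)‖ ≤ 8 / (15 * π * T) * (1 / ((j : ℝ) - k) ^ 2) := by
  have hπ := Real.pi_pos
  have hsep := abs_intCast_sub_le_abs_sub hlam j k
  have hone : (1 : ℝ) ≤ |(j : ℝ) - k| := by
    rw [← Int.cast_sub, ← Int.cast_abs]; exact_mod_cast Int.one_le_abs (sub_ne_zero.mpr hjk)
  refine (norm_cosWindowTransform_le (by linarith) (by nlinarith)).trans ?_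
  rw [div_mul_div_comm, mul_one]
  have hsq : ((j : ℝ) - k) ^ 2 ≤ (lam j - lam k) ^ 2 := sq_le_sq.mpr hsep
  have hpos : 0 < ((j : ℝ) - k) ^ 2 := by nlinarith [sq_abs ((j : ℝ) - k)]
  gcongr

theorem re_sum_sum_mul_cosWindowTransform_ge {T : ℝ} (hT : 2 ≤ T) {lam : ℤ → ℝ}
    (hlam : ∀ k : ℤ, lam (k + 1) - lam k ≥ 1) (s : Finset ℤ) (a : ℤ → ℂ) :
    (2 * T / π - 8 * π / (45 * T)) * ∑ k ∈ s, ‖a k‖ ^ 2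
      ≤ (∑ j ∈ s, ∑ k ∈ s, a j * conj (a k) * cosWindowTransform T (lam j - lam k)).re := by
  have hπ := Real.pi_pos
  have hT0 : 0 < T := by linarith
  set F : ℤ → ℤ → ℂ := fun j k => a j * conj (a k) * cosWindowTransform T (lam j - lam k)
  have hdiag : ∀ j, F j j = ((2 * T / π * ‖a j‖ ^ 2 : ℝ) : ℂ) := fun j => by
    simp only [F, sub_self, cosWindowTransform_zero hT0, Complex.mul_conj']
    push_cast; ring
  have hoff : ∀ j ∈ s, ∀ k ∈ s.erase j,
      ‖F j k‖ ≤ 8 / (15 * π * T) * (‖a j‖ * ‖a k‖ * (1 / ((j : ℝ) - k) ^ 2)) := by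
    intro j _ k hk
    simp only [F, norm_mul, Complex.norm_conj]
    rw [mul_left_comm]
    gcongr
    exact norm_cosWindowTransform_sub_le hT hlam (mem_erase.mp hk).1.symm
  have hschur := sum_sum_erase_mul_mul_le s (fun j => ‖a j‖)
    (K := fun j k : ℤ => 1 / ((j : ℝ) - k) ^ 2) (fun _ _ => by positivity)
    (fun j k => by rw [← neg_sub, neg_sq]) fun j _ => sum_erase_one_div_sub_sq_le s j
  have hoffsum : ‖∑ j ∈ s, ∑ k ∈ s.erase j, F j k‖ ≤ 8 * π / (45 * T) * ∑ k ∈ s, ‖a k‖ ^ 2 := by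
    calc ‖∑ j ∈ s, ∑ k ∈ s.erase j, F j k‖
        ≤ ∑ j ∈ s, ∑ k ∈ s.erase j, 8 / (15 * π * T) * (‖a j‖ * ‖a k‖ * (1 / ((j : ℝ) - k) ^ 2)) :=
          (norm_sum_le _ _).trans <| sum_le_sum fun j hj => (norm_sum_le _ _).trans <|
            sum_le_sum (hoff j hj)
      _ ≤ 8 / (15 * π * T) * (π ^ 2 / 3 * ∑ k ∈ s, ‖a k‖ ^ 2) := by
          simp only [← mul_sum]; gcongr
      _ = 8 * π / (45 * T) * ∑ k ∈ s, ‖a k‖ ^ 2 := by field_simp; ring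
  have hsplit : ∑ j ∈ s, ∑ k ∈ s, F j k
      = ((2 * T / π * ∑ k ∈ s, ‖a k‖ ^ 2 : ℝ) : ℂ) + ∑ j ∈ s, ∑ k ∈ s.erase j, F j k := by
    rw [sum_congr rfl fun j hj => (add_sum_erase s (F j) hj).symm, sum_add_distrib]
    simp only [hdiag]
    push_cast
    rw [mul_sum]
  rw [hsplit, Complex.add_re, Complex.ofReal_re]
  have := (Complex.abs_re_le_norm (∑ j ∈ s, ∑ k ∈ s.erase j, F j k)).trans hoffsum
  linarith [neg_abs_le (∑ j ∈ s, ∑ k ∈ s.erase j, F j k).re]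

theorem pi_sq_div_sixtyFour_le {T : ℝ} (hT : 2 ≤ T) :
    π ^ 2 / 64 ≤ 1 / T * (2 * T / π - 8 * π / (45 * T)) := by
  have hπ := Real.pi_pos
  rw [show 1 / T * (2 * T / π - 8 * π / (45 * T)) = 2 / π - 8 * π / (45 * T ^ 2) by
    field_simp]
  have hT2 : 8 * π / (45 * T ^ 2) ≤ 2 * π / 45 := by
    have hTsq : 4 ≤ T ^ 2 := by nlinarith
    rw [div_le_div_iff₀ (by positivity) (by norm_num)]
    nlinarith [mul_le_mul_of_nonneg_left hTsq hπ.le]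
  have hnum : π ^ 2 / 64 + 2 * π / 45 ≤ 2 / π := by
    rw [le_div_iff₀ hπ]; nlinarith [pi_lt_d2]
  linarith

theorem stmt_4 (T : ℝ) (hT : 2 ≤ T)
    (lam : ℤ → ℝ) (hlam : ∀ k : ℤ, lam (k + 1) - lam k ≥ 1)
    (s : Finset ℤ) (a : ℤ → ℂ) :
    (1 / T) * ∫ t in (-(T / 2))..(T / 2),
        ‖∑ k ∈ s, a k * Complex.exp (2 * π * Complex.I * lam k * t)‖ ^ 2
      ≥ π ^ 2 / 64 * ∑ k ∈ s, ‖a k‖ ^ 2 := by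
  have hcos : Continuous fun t : ℝ => Real.cos (π / T * t) := by fun_prop
  have hf : Continuous fun t : ℝ =>
      ‖∑ k ∈ s, a k * Complex.exp (2 * π * Complex.I * lam k * t)‖ ^ 2 := by fun_prop
  have hwindow : ∫ t in (-(T / 2))..(T / 2), Real.cos (π / T * t) *
        ‖∑ k ∈ s, a k * Complex.exp (2 * π * Complex.I * lam k * t)‖ ^ 2
      ≤ ∫ t in (-(T / 2))..(T / 2),
        ‖∑ k ∈ s, a k * Complex.exp (2 * π * Complex.I * lam k * t)‖ ^ 2 :=
    intervalIntegral.integral_mono_on (by linarith) ((hcos.mul hf).intervalIntegrable _ _)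
      (hf.intervalIntegrable _ _) fun t _ => mul_le_of_le_one_left (by positivity) (cos_le_one _)
  have hlower : (2 * T / π - 8 * π / (45 * T)) * ∑ k ∈ s, ‖a k‖ ^ 2
      ≤ ∫ t in (-(T / 2))..(T / 2), Real.cos (π / T * t) *
        ‖∑ k ∈ s, a k * Complex.exp (2 * π * Complex.I * lam k * t)‖ ^ 2 :=
    (re_sum_sum_mul_cosWindowTransform_ge hT hlam s a).trans_eq
      (integral_mul_norm_sum_cexp_sq s a lam (hcos.intervalIntegrable _ _)).symm
  rw [ge_iff_le]
  calc π ^ 2 / 64 * ∑ k ∈ s, ‖a k‖ ^ 2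
      ≤ 1 / T * ((2 * T / π - 8 * π / (45 * T)) * ∑ k ∈ s, ‖a k‖ ^ 2) := by
        rw [← mul_assoc]; gcongr; exact pi_sq_div_sixtyFour_le hT
    _ ≤ _ := by gcongr; exact hlower.trans hwindow
end

section
/- Let $q > 1$, let $(n_j)_{j \ge 0}$ be integers with $n_0 \ge 1$ and $n_{j+1} \ge q n_j$, and let $1 \le p < \infty$. There exist constants $A_{p,q}, B_{p,q} > 0$ such that for every finitely supported complex sequence $(c_j)$, $A_{p,q}\left(\sum_j |c_j|^2\right)^{1/2} \le \left(\int_0^1 \left|\sum_j c_j e^{2i\pi n_j t}\right|^p dt\right)^{1/p} \le B_{p,q}\left(\sum_j |c_j|^2\right)^{1/2}$. -/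
/-!
The characters `e_k(t) = exp(2πikt)` are orthonormal on `[0, 1]`, so `‖F‖₂² = ∑ |c_j|²` for
`F = ∑ c_j e_{n_j}`. Expanding `F ^ m` groups the products of coefficients by the frequency
`N = n_{j₁} + ⋯ + n_{j_m}`. For a Hadamard-lacunary sequence the largest term of such a sum lies in
a window `n_j ≤ N ≤ m n_j` containing boundedly many indices, so by induction on `m` the number of
representations of `N` is bounded by a constant `C_m`, and Cauchy–Schwarz on each frequency gives
`‖F‖_{2m}^{2m} ≤ C_m ‖F‖₂^{2m}`. The upper bound follows from `‖F‖_p ≤ ‖F‖_{2m}` on a probability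
space. For the lower bound, `‖F‖₂ ≤ ‖F‖_p` when `p ≥ 2`; when `p < 2`, Hölder's inequality
interpolating the exponent `2` between `p` and `4`, combined with `‖F‖₄⁴ ≤ C₂ ‖F‖₂⁴`, bounds `‖F‖₂`
by a multiple of `‖F‖_p`.
-/

open Real MeasureTheory Finset
open scoped ComplexConjugate

noncomputable def fourierExp (k : ℕ) (t : ℝ) : ℂ := Complex.exp (2 * π * Complex.I * k * t)

@[fun_prop]
theorem continuous_fourierExp (k : ℕ) : Continuous (fourierExp k) := by
  unfold fourierExp; fun_prop

theorem prod_fourierExp {ι : Type*} (u : Finset ι) (a : ι → ℕ) (t : ℝ) :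
    ∏ i ∈ u, fourierExp (a i) t = fourierExp (∑ i ∈ u, a i) t := by
  simp only [fourierExp, ← Complex.exp_sum, Nat.cast_sum, mul_sum, sum_mul]

theorem integral_fourierExp_mul_conj (a b : ℕ) :
    ∫ t in (0 : ℝ)..1, fourierExp a t * conj (fourierExp b t) = if a = b then 1 else 0 := by
  have hexp : ∀ t : ℝ, fourierExp a t * conj (fourierExp b t)
      = Complex.exp ((2 * π * Complex.I * ((a - b : ℤ) : ℂ)) * t) := by
    intro t
    rw [fourierExp, fourierExp, ← Complex.exp_conj, ← Complex.exp_add]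
    simp only [map_mul, Complex.conj_ofReal, Complex.conj_I, Complex.conj_natCast, map_ofNat]
    push_cast
    ring_nf
  simp_rw [hexp]
  split_ifs with hab
  · simp [hab]
  · have hne : ((a - b : ℤ) : ℂ) ≠ 0 := Int.cast_ne_zero.2 (sub_ne_zero.2 (by exact_mod_cast hab))
    rw [integral_exp_mul_complex (mul_ne_zero (by simp [pi_ne_zero, Complex.I_ne_zero]) hne)]
    simp only [Complex.ofReal_one, mul_one, Complex.ofReal_zero, mul_zero, Complex.exp_zero]
    rw [mul_comm _ ((a - b : ℤ) : ℂ), Complex.exp_int_mul_two_pi_mul_I, sub_self, zero_div]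

theorem norm_sum_sq_le_card_mul {ι E : Type*} [SeminormedAddCommGroup E] (u : Finset ι)
    (z : ι → E) :
    ‖∑ i ∈ u, z i‖ ^ 2 ≤ #u * ∑ i ∈ u, ‖z i‖ ^ 2 :=
  (pow_le_pow_left₀ (norm_nonneg _) (norm_sum_le _ _) 2).trans sq_sum_le_card_mul_sum_sq

theorem integral_norm_sum_fourierExp_sq {ι : Type*} (u : Finset ι) {ν : ι → ℕ}
    (hν : Set.InjOn ν u) (d : ι → ℂ) :
    ∫ t in (0 : ℝ)..1, ‖∑ k ∈ u, d k * fourierExp (ν k) t‖ ^ 2 = ∑ k ∈ u, ‖d k‖ ^ 2 := by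
  have horth : ∀ j ∈ u, ∑ k ∈ u, d j * conj (d k) *
      ∫ t in (0 : ℝ)..1, fourierExp (ν j) t * conj (fourierExp (ν k) t) = d j * conj (d j) := by
    intro j hj
    simp_rw [integral_fourierExp_mul_conj, mul_ite, mul_one, mul_zero]
    rw [sum_eq_single_of_mem j hj fun k hk hkj => if_neg fun h => hkj (hν hk hj h.symm), if_pos rfl]
  apply Complex.ofReal_injective
  calc ((∫ t in (0 : ℝ)..1, ‖∑ k ∈ u, d k * fourierExp (ν k) t‖ ^ 2 : ℝ) : ℂ)
      = ∫ t in (0 : ℝ)..1, (∑ k ∈ u, d k * fourierExp (ν k) t) *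
          conj (∑ k ∈ u, d k * fourierExp (ν k) t) := by
        rw [← intervalIntegral.integral_ofReal]
        push_cast
        simp_rw [Complex.mul_conj']
    _ = ∑ j ∈ u, ∑ k ∈ u, d j * conj (d k) *
          ∫ t in (0 : ℝ)..1, fourierExp (ν j) t * conj (fourierExp (ν k) t) := by
        simp_rw [map_sum, map_mul, sum_mul_sum]
        rw [intervalIntegral.integral_finsetSum fun j _ =>
          (by fun_prop : Continuous _).intervalIntegrable _ _]
        refine sum_congr rfl fun j _ => ?_
        rw [intervalIntegral.integral_finsetSum fun k _ =>
          (by fun_prop : Continuous _).intervalIntegrable _ _]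
        refine sum_congr rfl fun k _ => ?_
        rw [← intervalIntegral.integral_const_mul]
        congr 1; ext t; ring
    _ = ∑ j ∈ u, d j * conj (d j) := sum_congr rfl horth
    _ = _ := by push_cast; simp_rw [Complex.mul_conj']

def representations (n : ℕ → ℕ) (s : Finset ℕ) (m N : ℕ) : Finset (Fin m → ℕ) :=
  (Fintype.piFinset fun _ => s).filter fun σ => ∑ i, n (σ i) = N

theorem sum_fourierExp_pow (n : ℕ → ℕ) (s : Finset ℕ) (c : ℕ → ℂ) (m : ℕ) (t : ℝ) :
    (∑ j ∈ s, c j * fourierExp (n j) t) ^ m =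
      ∑ N ∈ (Fintype.piFinset fun _ : Fin m => s).image (fun σ => ∑ i, n (σ i)),
        (∑ σ ∈ representations n s m N, ∏ i, c (σ i)) * fourierExp N t := by
  rw [sum_pow', ← sum_fiberwise_of_maps_to fun σ hσ => mem_image_of_mem (fun σ => ∑ i, n (σ i)) hσ]
  refine sum_congr rfl fun N _ => ?_
  rw [representations, sum_mul]
  refine sum_congr rfl fun σ hσ => ?_
  rw [prod_mul_distrib, prod_fourierExp, (mem_filter.1 hσ).2]

theorem integral_norm_sum_fourierExp_pow_le {n : ℕ → ℕ} {s : Finset ℕ} {m C : ℕ}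
    (hC : ∀ N, #(representations n s m N) ≤ C) (c : ℕ → ℂ) :
    ∫ t in (0 : ℝ)..1, ‖∑ j ∈ s, c j * fourierExp (n j) t‖ ^ (2 * m)
      ≤ C * (∑ j ∈ s, ‖c j‖ ^ 2) ^ m := by
  have hpow : ∀ t : ℝ, ‖∑ j ∈ s, c j * fourierExp (n j) t‖ ^ (2 * m) =
      ‖(∑ j ∈ s, c j * fourierExp (n j) t) ^ m‖ ^ 2 := fun t => by rw [norm_pow, ← pow_mul']
  simp_rw [hpow, sum_fourierExp_pow]
  rw [integral_norm_sum_fourierExp_sq _ (ν := fun N => N) Function.injective_id.injOn]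
  calc ∑ N ∈ _, ‖∑ σ ∈ representations n s m N, ∏ i, c (σ i)‖ ^ 2
      ≤ ∑ N ∈ (Fintype.piFinset fun _ : Fin m => s).image (fun σ => ∑ i, n (σ i)),
          (C : ℝ) * ∑ σ ∈ representations n s m N, ‖∏ i, c (σ i)‖ ^ 2 := by
        gcongr with N
        exact (norm_sum_sq_le_card_mul _ _).trans
          (mul_le_mul_of_nonneg_right (by exact_mod_cast hC N) (by positivity))
    _ = C * (∑ j ∈ s, ‖c j‖ ^ 2) ^ m := by
        rw [← mul_sum]
        unfold representations
        rw [sum_fiberwise_of_maps_to fun σ hσ => mem_image_of_mem (fun σ => ∑ i, n (σ i)) hσ,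
          sum_pow']
        simp only [norm_prod, prod_pow]

theorem card_filter_apply_eq_representations_le (n : ℕ → ℕ) (s : Finset ℕ) {m : ℕ} (N : ℕ)
    (i : Fin (m + 1)) (j : ℕ) :
    #((representations n s (m + 1) N).filter fun σ => σ i = j)
      ≤ #(representations n s m (N - n j)) := by
  refine card_le_card_of_injOn (fun σ => i.removeNth σ) (fun σ hσ => ?_) fun σ hσ τ hτ hστ => ?_
  · simp only [representations, mem_coe, mem_filter, Fintype.mem_piFinset] at hσ ⊢
    obtain ⟨⟨hσs, hσN⟩, hσj⟩ := hσ
    refine ⟨fun k => hσs _, ?_⟩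
    rw [Fin.sum_univ_succAbove _ i, hσj] at hσN
    simp only [Fin.removeNth]
    omega
  · simp only [coe_filter] at hσ hτ
    rw [← Fin.insertNth_self_removeNth i σ, ← Fin.insertNth_self_removeNth i τ, hσ.2, hτ.2]
    exact congrArg _ hστ

theorem exists_apply_mem_filter_of_mem_representations {n : ℕ → ℕ} {s : Finset ℕ} {m N : ℕ}
    {σ : Fin (m + 1) → ℕ} (hσ : σ ∈ representations n s (m + 1) N) :
    ∃ i, σ i ∈ s.filter fun j => n j ≤ N ∧ N ≤ (m + 1) * n j := by
  obtain ⟨hσs, hσN⟩ := mem_filter.1 hσ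
  obtain ⟨i, -, hi⟩ := exists_max_image univ (fun i => n (σ i)) univ_nonempty
  refine ⟨i, mem_filter.2 ⟨Fintype.mem_piFinset.1 hσs i, ?_, ?_⟩⟩
  · rw [← hσN]
    exact single_le_sum (f := fun k => n (σ k)) (fun _ _ => Nat.zero_le _) (mem_univ i)
  · calc N = ∑ k, n (σ k) := hσN.symm
      _ ≤ ∑ _k : Fin (m + 1), n (σ i) := sum_le_sum fun k _ => hi k (mem_univ k)
      _ = (m + 1) * n (σ i) := by simp

theorem card_representations_succ_le {n : ℕ → ℕ} {s : Finset ℕ} {m C : ℕ}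
    (hC : ∀ N, #(representations n s m N) ≤ C) (N : ℕ) :
    #(representations n s (m + 1) N)
      ≤ (m + 1) * (#(s.filter fun j => n j ≤ N ∧ N ≤ (m + 1) * n j) * C) := by
  set W := s.filter fun j => n j ≤ N ∧ N ≤ (m + 1) * n j
  set R := representations n s (m + 1) N
  have hcover : R ⊆ univ.biUnion fun i => W.biUnion fun j => R.filter fun σ => σ i = j := by
    intro σ hσ
    obtain ⟨i, hi⟩ := exists_apply_mem_filter_of_mem_representations hσ
    exact mem_biUnion.2 ⟨i, mem_univ i, mem_biUnion.2 ⟨σ i, hi, mem_filter.2 ⟨hσ, rfl⟩⟩⟩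
  refine (card_le_card hcover).trans ?_
  simpa using card_biUnion_le_card_mul univ _ _ fun i _ => card_biUnion_le_card_mul W _ _
    fun j _ => (card_filter_apply_eq_representations_le n s N i j).trans (hC _)

section Lacunary

variable {q : ℝ} {n : ℕ → ℕ}

theorem lacunary_growth (hq : 0 ≤ q) (hlac : ∀ j, (n (j + 1) : ℝ) ≥ q * n j) (j k : ℕ) :
    q ^ k * n j ≤ n (j + k) := by
  induction k with
  | zero => simp
  | succ k ih =>
    calc q ^ (k + 1) * n j = q * (q ^ k * n j) := by ring
      _ ≤ q * n (j + k) := by gcongr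
      _ ≤ n (j + k + 1) := hlac (j + k)

theorem lacunary_pos (hq : 1 ≤ q) (hn0 : 1 ≤ n 0) (hlac : ∀ j, (n (j + 1) : ℝ) ≥ q * n j)
    (j : ℕ) : 0 < n j := by
  have hgrow : q ^ j * n 0 ≤ n j := by simpa using lacunary_growth (by linarith) hlac 0 j
  have hone : (1 : ℝ) ≤ q ^ j * n 0 :=
    one_le_mul_of_one_le_of_one_le (one_le_pow₀ hq) (by exact_mod_cast hn0)
  exact Nat.one_le_cast.1 (hone.trans hgrow)

theorem lacunary_strictMono (hq : 1 < q) (hn0 : 1 ≤ n 0)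
    (hlac : ∀ j, (n (j + 1) : ℝ) ≥ q * n j) : StrictMono n := by
  refine strictMono_nat_of_lt_succ fun j => ?_
  have : (0 : ℝ) < n j := by exact_mod_cast lacunary_pos hq.le hn0 hlac j
  have : (n j : ℝ) < n (j + 1) := by nlinarith [hlac j]
  exact_mod_cast this

theorem card_filter_le_of_lacunary (hq : 1 < q) (hn0 : 1 ≤ n 0)
    (hlac : ∀ j, (n (j + 1) : ℝ) ≥ q * n j) {M K : ℕ} (hK : (M : ℝ) < q ^ K)
    (s : Finset ℕ) (N : ℕ) : #(s.filter fun j => n j ≤ N ∧ N ≤ M * n j) ≤ K := by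
  set W := s.filter fun j => n j ≤ N ∧ N ≤ M * n j
  rcases W.eq_empty_or_nonempty with hW | hW
  · simp [hW]
  suffices W ⊆ Ico (W.min' hW) (W.min' hW + K) by simpa using card_le_card this
  intro j hj
  set a := W.min' hW
  have haj : a ≤ j := W.min'_le j hj
  refine mem_Ico.2 ⟨haj, not_le.1 fun hKj => ?_⟩
  have hNa : (N : ℝ) ≤ M * n a := by exact_mod_cast (mem_filter.1 (W.min'_mem hW)).2.2
  have hjN : (n j : ℝ) ≤ N := by exact_mod_cast (mem_filter.1 hj).2.1
  have hna : (0 : ℝ) < n a := by exact_mod_cast lacunary_pos hq.le hn0 hlac a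
  have hgrow := lacunary_growth (by linarith) hlac a (j - a)
  rw [Nat.add_sub_cancel' haj] at hgrow
  have : q ^ K ≤ q ^ (j - a) := pow_le_pow_right₀ hq.le (by omega)
  nlinarith

theorem exists_card_representations_le (hq : 1 < q) (hn0 : 1 ≤ n 0)
    (hlac : ∀ j, (n (j + 1) : ℝ) ≥ q * n j) (m : ℕ) :
    ∃ C : ℕ, 0 < C ∧ ∀ s N, #(representations n s m N) ≤ C := by
  induction m with
  | zero =>
    refine ⟨1, one_pos, fun s N => (card_filter_le _ _).trans ?_⟩
    simp
  | succ m ih =>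
    obtain ⟨C, hC, hCle⟩ := ih
    obtain ⟨K, hK⟩ := pow_unbounded_of_one_lt ((m + 1 : ℕ) : ℝ) hq
    have hK0 : 0 < K := Nat.pos_of_ne_zero fun h => by simp [h] at hK; linarith
    refine ⟨(m + 1) * (K * C), by positivity, fun s N => ?_⟩
    refine (card_representations_succ_le (hCle s) N).trans ?_
    gcongr
    exact card_filter_le_of_lacunary hq hn0 hlac (by exact_mod_cast hK) s N

end Lacunary

section Moments

variable {α : Type*} [MeasurableSpace α] {μ : Measure α} {X : α → ℝ}

theorem memLp_rpow_mul_of_integrable (hX0 : 0 ≤ X) (hXm : AEStronglyMeasurable X μ) {a u : ℝ}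
    (ha : 0 < a) (hXu : Integrable (fun x => X x ^ u) μ) :
    MemLp (fun x => X x ^ (a * u)) (ENNReal.ofReal (1 / a)) μ := by
  have h0 : ENNReal.ofReal (1 / a) ≠ 0 := by simpa using ha
  rw [← integrable_norm_rpow_iff (hXm.aemeasurable.pow_const _).aestronglyMeasurable h0
    ENNReal.ofReal_ne_top, ENNReal.toReal_ofReal (by positivity)]
  refine hXu.congr (ae_of_all _ fun x => ?_)
  simp only [norm_of_nonneg (rpow_nonneg (hX0 x) _), ← rpow_mul (hX0 x)]
  field_simp

theorem integral_rpow_mul_add_mul_le (hX0 : 0 ≤ X) (hXm : AEStronglyMeasurable X μ)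
    {a b u v : ℝ} (ha : 0 < a) (hb : 0 < b) (hab : a + b = 1) (hu : 0 ≤ u) (hv : 0 ≤ v)
    (hXu : Integrable (fun x => X x ^ u) μ) (hXv : Integrable (fun x => X x ^ v) μ) :
    ∫ x, X x ^ (a * u + b * v) ∂μ ≤ (∫ x, X x ^ u ∂μ) ^ a * (∫ x, X x ^ v ∂μ) ^ b := by
  have holder := integral_mul_le_Lp_mul_Lq_of_nonneg (holderConjugate_one_div ha hb hab)
    (ae_of_all _ fun x => rpow_nonneg (hX0 x) (a * u))
    (ae_of_all _ fun x => rpow_nonneg (hX0 x) (b * v))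
    (memLp_rpow_mul_of_integrable hX0 hXm ha hXu) (memLp_rpow_mul_of_integrable hX0 hXm hb hXv)
  have hsplit : ∀ x, X x ^ (a * u + b * v) = X x ^ (a * u) * X x ^ (b * v) := fun x =>
    rpow_add_of_nonneg (hX0 x) (by positivity) (by positivity)
  have hpow : ∀ {c w : ℝ}, 0 < c → ∀ x, (X x ^ (c * w)) ^ (1 / c) = X x ^ w := fun hc x => by
    rw [← rpow_mul (hX0 x)]
    field_simp
  simpa only [hsplit, hpow ha, hpow hb, one_div_one_div] using holder

theorem rpow_integral_rpow_le_rpow_integral_rpow [IsProbabilityMeasure μ] (hX0 : 0 ≤ X)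
    (hXm : AEStronglyMeasurable X μ) {u v : ℝ} (hu : 0 < u) (huv : u ≤ v)
    (hXv : Integrable (fun x => X x ^ v) μ) :
    (∫ x, X x ^ u ∂μ) ^ (1 / u) ≤ (∫ x, X x ^ v ∂μ) ^ (1 / v) := by
  rcases huv.eq_or_lt with rfl | huv
  · rfl
  have hv : 0 < v := hu.trans huv
  -- `u = (u / v) * v + (1 - u / v) * 0`, and `∫ X ^ 0 = 1` on a probability space.
  have hlyap := integral_rpow_mul_add_mul_le hX0 hXm (div_pos hu hv)
    (sub_pos.2 ((div_lt_one hv).2 huv)) (add_sub_cancel _ 1) hv.le le_rfl hXv (by simp)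
  simp only [mul_zero, add_zero, div_mul_cancel₀ u hv.ne', rpow_zero, integral_const, probReal_univ,
    smul_eq_mul, mul_one, one_rpow] at hlyap
  calc (∫ x, X x ^ u ∂μ) ^ (1 / u) ≤ ((∫ x, X x ^ v ∂μ) ^ (u / v)) ^ (1 / u) :=
        rpow_le_rpow (integral_nonneg fun x => rpow_nonneg (hX0 x) u) hlyap (by positivity)
    _ = (∫ x, X x ^ v ∂μ) ^ (1 / v) := by
        rw [← rpow_mul (integral_nonneg fun x => rpow_nonneg (hX0 x) v)]
        field_simp

theorem rpow_integral_rpow_le_of_integral_pow_le [IsProbabilityMeasure μ] (hX0 : 0 ≤ X)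
    (hXm : AEStronglyMeasurable X μ) {p C S : ℝ} {m : ℕ} (hp : 0 < p) (hpm : p ≤ 2 * m)
    (hC : 0 ≤ C) (hS : 0 ≤ S) (hX2m : Integrable (fun x => X x ^ (2 * m)) μ)
    (hmom : ∫ x, X x ^ (2 * m) ∂μ ≤ C * S ^ m) :
    (∫ x, X x ^ p ∂μ) ^ (1 / p) ≤ C ^ (1 / (2 * m : ℝ)) * S ^ (1 / 2 : ℝ) := by
  have hcast : ∀ x, X x ^ (2 * m : ℝ) = X x ^ (2 * m) := fun x => by
    exact_mod_cast rpow_natCast (X x) (2 * m)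
  calc (∫ x, X x ^ p ∂μ) ^ (1 / p) ≤ (∫ x, X x ^ (2 * m : ℝ) ∂μ) ^ (1 / (2 * m : ℝ)) :=
        rpow_integral_rpow_le_rpow_integral_rpow hX0 hXm hp hpm (by simpa only [hcast] using hX2m)
    _ ≤ (C * S ^ m) ^ (1 / (2 * m : ℝ)) := by
        simp only [hcast]
        exact rpow_le_rpow (integral_nonneg fun x => pow_nonneg (hX0 x) _) hmom (by positivity)
    _ = C ^ (1 / (2 * m : ℝ)) * S ^ (1 / 2 : ℝ) := by
        have hm : (m : ℝ) ≠ 0 := by rintro h; rw [h] at hpm; linarith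
        rw [mul_rpow hC (by positivity), ← rpow_natCast, ← rpow_mul hS]
        congr 2
        field_simp

theorem rpow_mul_rpow_integral_sq_le_of_lt_two (hX0 : 0 ≤ X) (hXm : AEStronglyMeasurable X μ)
    {p C : ℝ} (hp : 0 < p) (hp2 : p < 2) (hC : 0 < C)
    (hXp : Integrable (fun x => X x ^ p) μ) (hX4 : Integrable (fun x => X x ^ 4) μ)
    (h4 : ∫ x, X x ^ 4 ∂μ ≤ C * (∫ x, X x ^ 2 ∂μ) ^ 2) :
    C ^ ((p - 2) / (2 * p)) * (∫ x, X x ^ 2 ∂μ) ^ (1 / 2 : ℝ) ≤ (∫ x, X x ^ p ∂μ) ^ (1 / p) := by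
  set S := ∫ x, X x ^ 2 ∂μ
  set I := ∫ x, X x ^ p ∂μ
  have hS : 0 ≤ S := integral_nonneg fun x => pow_nonneg (hX0 x) 2
  have hI : 0 ≤ I := integral_nonneg fun x => rpow_nonneg (hX0 x) p
  have h4p : 0 < 4 - p := by linarith
  -- Hölder between the exponents `p` and `4`: `2 = a * p + b * 4`.
  set a := 2 / (4 - p) with ha
  set b := (2 - p) / (4 - p) with hb
  have hlyap := integral_rpow_mul_add_mul_le hX0 hXm (a := a) (b := b) (by positivity)
    (div_pos (by linarith) h4p) (by rw [ha, hb]; field_simp; ring) hp.le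
    (by norm_num : (0 : ℝ) ≤ 4) hXp (by exact_mod_cast hX4)
  have hexp : a * p + b * 4 = (2 : ℕ) := by rw [ha, hb]; field_simp; ring
  simp only [hexp, rpow_natCast] at hlyap
  have key : S ≤ I ^ a * (C * S ^ 2) ^ b := by
    refine hlyap.trans
      (mul_le_mul_of_nonneg_left (rpow_le_rpow ?_ ?_ (by positivity)) (by positivity))
    · exact integral_nonneg fun x => rpow_nonneg (hX0 x) 4
    · exact_mod_cast h4
  rcases hS.eq_or_lt with hS0 | hSpos
  · rw [← hS0, zero_rpow (by norm_num), mul_zero]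
    positivity
  have step1 : S ^ (p / (4 - p)) ≤ C ^ b * I ^ a := by
    have hsplit : S ^ (p / (4 - p)) * S ^ (2 * b) = S := by
      rw [← rpow_add hSpos, show p / (4 - p) + 2 * b = 1 by rw [hb]; field_simp; ring, rpow_one]
    rw [mul_rpow hC.le (by positivity), ← rpow_natCast, ← rpow_mul hS, Nat.cast_ofNat] at key
    refine le_of_mul_le_mul_right ?_ (rpow_pos_of_pos hSpos (2 * b))
    rw [hsplit]
    exact key.trans_eq (by ring)
  have step2 : S ^ (1 / 2 : ℝ) ≤ C ^ ((2 - p) / (2 * p)) * I ^ (1 / p) := by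
    have h := rpow_le_rpow (by positivity) step1 (by positivity : (0 : ℝ) ≤ (4 - p) / (2 * p))
    rwa [← rpow_mul hS, mul_rpow (by positivity) (by positivity), ← rpow_mul hC.le,
      ← rpow_mul hI, show p / (4 - p) * ((4 - p) / (2 * p)) = 1 / 2 by field_simp,
      show b * ((4 - p) / (2 * p)) = (2 - p) / (2 * p) by rw [hb]; field_simp,
      show a * ((4 - p) / (2 * p)) = 1 / p by rw [ha]; field_simp] at h
  calc C ^ ((p - 2) / (2 * p)) * S ^ (1 / 2 : ℝ)
      ≤ C ^ ((p - 2) / (2 * p)) * (C ^ ((2 - p) / (2 * p)) * I ^ (1 / p)) := by gcongr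
    _ = I ^ (1 / p) := by
        rw [← mul_assoc, ← rpow_add hC, show (p - 2) / (2 * p) + (2 - p) / (2 * p) = 0 by ring,
          rpow_zero, one_mul]

theorem min_mul_rpow_integral_sq_le [IsProbabilityMeasure μ] (hX0 : 0 ≤ X)
    (hXm : AEStronglyMeasurable X μ) {p C : ℝ} (hp : 0 < p) (hC : 0 < C)
    (hXp : Integrable (fun x => X x ^ p) μ) (hX4 : Integrable (fun x => X x ^ 4) μ)
    (h4 : ∫ x, X x ^ 4 ∂μ ≤ C * (∫ x, X x ^ 2 ∂μ) ^ 2) :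
    min 1 (C ^ ((p - 2) / (2 * p))) * (∫ x, X x ^ 2 ∂μ) ^ (1 / 2 : ℝ)
      ≤ (∫ x, X x ^ p ∂μ) ^ (1 / p) := by
  have hS : 0 ≤ ∫ x, X x ^ 2 ∂μ := integral_nonneg fun x => pow_nonneg (hX0 x) 2
  by_cases hp2 : 2 ≤ p
  · calc min 1 (C ^ ((p - 2) / (2 * p))) * (∫ x, X x ^ 2 ∂μ) ^ (1 / 2 : ℝ)
        ≤ (∫ x, X x ^ (2 : ℝ) ∂μ) ^ (1 / 2 : ℝ) := by
          simp only [rpow_two]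
          exact mul_le_of_le_one_left (by positivity) (min_le_left _ _)
      _ ≤ (∫ x, X x ^ p ∂μ) ^ (1 / p) :=
          rpow_integral_rpow_le_rpow_integral_rpow hX0 hXm two_pos hp2 hXp
  · exact (mul_le_mul_of_nonneg_right (min_le_right _ _) (by positivity)).trans
      (rpow_mul_rpow_integral_sq_le_of_lt_two hX0 hXm hp (not_le.1 hp2) hC hXp hX4 h4)

end Moments

theorem stmt_10 (q : ℝ) (hq : 1 < q) (n : ℕ → ℕ) (hn0 : 1 ≤ n 0)
    (hlac : ∀ j, (n (j + 1) : ℝ) ≥ q * n j)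
    (p : ℝ) (hp : 1 ≤ p) :
    ∃ A B : ℝ, 0 < A ∧ 0 < B ∧
      ∀ (s : Finset ℕ) (c : ℕ → ℂ),
        A * (∑ j ∈ s, ‖c j‖ ^ 2) ^ ((1 : ℝ) / 2)
          ≤ (∫ t in (0 : ℝ)..1,
              ‖∑ j ∈ s, c j * Complex.exp (2 * π * Complex.I * (n j : ℂ) * t)‖ ^ p)
            ^ (1 / p) ∧
        (∫ t in (0 : ℝ)..1,
            ‖∑ j ∈ s, c j * Complex.exp (2 * π * Complex.I * (n j : ℂ) * t)‖ ^ p)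
          ^ (1 / p)
          ≤ B * (∑ j ∈ s, ‖c j‖ ^ 2) ^ ((1 : ℝ) / 2) := by
  have hp0 : 0 < p := by linarith
  obtain ⟨Cm, hCm, hrepm⟩ := exists_card_representations_le hq hn0 hlac ⌈p⌉₊
  obtain ⟨C4, hC4, hrep2⟩ := exists_card_representations_le hq hn0 hlac 2
  refine ⟨min 1 ((C4 : ℝ) ^ ((p - 2) / (2 * p))), (Cm : ℝ) ^ (1 / (2 * ⌈p⌉₊ : ℝ)),
    by positivity, by positivity, fun s c => ?_⟩
  have : IsProbabilityMeasure (volume.restrict (Set.Ioc (0 : ℝ) 1)) := ⟨by simp⟩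
  set X : ℝ → ℝ := fun t => ‖∑ j ∈ s, c j * fourierExp (n j) t‖
  have hX : Continuous X := by fun_prop
  have hL2 : ∫ t in (0 : ℝ)..1, X t ^ 2 = ∑ j ∈ s, ‖c j‖ ^ 2 :=
    integral_norm_sum_fourierExp_sq s (lacunary_strictMono hq hn0 hlac).injective.injOn c
  have h4 := integral_norm_sum_fourierExp_pow_le (hrep2 s) c
  have hm := integral_norm_sum_fourierExp_pow_le (hrepm s) c
  simp only [intervalIntegral.integral_of_le zero_le_one] at hL2 h4 hm ⊢
  rw [← hL2] at h4 hm ⊢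
  constructor
  · exact min_mul_rpow_integral_sq_le (fun t => norm_nonneg _) hX.aestronglyMeasurable hp0
      (by positivity) (hX.rpow_const fun _ => Or.inr hp0.le).integrableOn_Ioc
      (hX.pow 4).integrableOn_Ioc h4
  · exact rpow_integral_rpow_le_of_integral_pow_le (fun t => norm_nonneg _)
      hX.aestronglyMeasurable hp0 (by linarith [Nat.le_ceil p]) (by positivity) (by positivity)
      (hX.pow _).integrableOn_Ioc hm
end

section
/- There is a constant $C > 0$ such that for every integer $N \ge 2$ and every $q$-lacunary integer sequence $(n_k)$ with $q > 1$, $\int_{-1/2}^{1/2}\left|\sum_{k=1}^N e^{2i\pi n_k t}\right| dt \ge C\sqrt{N}$ (with $C$ depending only on $q$). -/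
open Real MeasureTheory Finset

/-!
For `f t = ∑_{k ≤ N} exp (2πi n_k t)` the frequencies are distinct, so `∫ |f|² = N`, while
`∫ |f|⁴` counts the solutions of `n_a + n_b = n_c + n_d`. Given `v = n_c + n_d`, the larger of
`n_a, n_b` lies in `[v/2, v]`, which by lacunarity contains at most `L` terms (`2 < q ^ L`), and it
determines the smaller one; hence `∫ |f|⁴ ≤ 2 L N²`. Integrating the pointwise bound
`x² ≤ s x + x⁴ / s²` with `s ≍ √N` turns these two moments into `∫ |f| ≥ C √N`.
-/

theorem integral_exp_two_pi_I_int_mul (m : ℤ) :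
    ∫ t in (-(1 / 2) : ℝ)..(1 / 2), Complex.exp (2 * π * Complex.I * m * t) =
      if m = 0 then 1 else 0 := by
  split_ifs with hm
  · norm_num [hm]
  · have hc : 2 * π * Complex.I * m ≠ 0 := by simp [Real.pi_ne_zero, hm]
    have hperiod : 2 * π * Complex.I * m * ((1 / 2 : ℝ) : ℂ) =
        2 * π * Complex.I * m * ((-(1 / 2) : ℝ) : ℂ) + m * (2 * π * Complex.I) := by
      push_cast; ring
    rw [integral_exp_mul_complex hc, hperiod, Complex.exp_add, Complex.exp_int_mul_two_pi_mul_I,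
      mul_one, sub_self, zero_div]

section ExpSum

variable {ι : Type*} (s : Finset ι) (m : ι → ℤ)

noncomputable def expSum (t : ℝ) : ℂ := ∑ i ∈ s, Complex.exp (2 * π * Complex.I * m i * t)

theorem continuous_expSum : Continuous (expSum s m) := by
  unfold expSum; fun_prop

theorem expSum_mul_conj (t : ℝ) :
    expSum s m t * starRingEnd ℂ (expSum s m t) =
      ∑ p ∈ s ×ˢ s, Complex.exp (2 * π * Complex.I * (m p.1 - m p.2 : ℤ) * t) := by
  simp only [expSum, map_sum, ← Complex.exp_conj, sum_mul_sum, ← Complex.exp_add, sum_product]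
  congr! 3
  simp only [map_mul, Complex.conj_ofReal, Complex.conj_I, map_intCast, map_ofNat]
  push_cast
  ring

theorem integral_norm_expSum_sq :
    ∫ t in (-(1 / 2) : ℝ)..(1 / 2), ‖expSum s m t‖ ^ 2 =
      #{p ∈ s ×ˢ s | m p.1 = m p.2} := by
  apply Complex.ofReal_injective
  rw [← intervalIntegral.integral_ofReal]
  simp only [Complex.ofReal_pow, ← Complex.mul_conj', expSum_mul_conj]
  rw [intervalIntegral.integral_finsetSum fun p _ =>
    (by fun_prop : Continuous _).intervalIntegrable _ _]
  simp only [integral_exp_two_pi_I_int_mul, sub_eq_zero, sum_boole]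
  push_cast
  rfl

theorem integral_norm_expSum_sq_of_injOn [DecidableEq ι] (hm : Set.InjOn m s) :
    ∫ t in (-(1 / 2) : ℝ)..(1 / 2), ‖expSum s m t‖ ^ 2 = #s := by
  have hdiag : {p ∈ s ×ˢ s | m p.1 = m p.2} = s.diag := by
    rw [diag_eq_filter]
    exact filter_congr fun p hp => by
      rw [mem_product] at hp
      exact ⟨fun h => hm hp.1 hp.2 h, congrArg m⟩
  rw [integral_norm_expSum_sq, hdiag, diag_card]

theorem expSum_sq (t : ℝ) :
    expSum s m t ^ 2 = expSum (s ×ˢ s) (fun p => m p.1 + m p.2) t := by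
  simp only [expSum, sq, sum_mul_sum, ← Complex.exp_add, sum_product]
  congr! 3
  push_cast
  ring

theorem integral_norm_expSum_pow_four :
    ∫ t in (-(1 / 2) : ℝ)..(1 / 2), ‖expSum s m t‖ ^ 4 =
      #{x ∈ (s ×ˢ s) ×ˢ (s ×ˢ s) | m x.1.1 + m x.1.2 = m x.2.1 + m x.2.2} := by
  have h (t : ℝ) : ‖expSum s m t‖ ^ 4 = ‖expSum s m t ^ 2‖ ^ 2 := by rw [norm_pow]; ring
  simp only [h, expSum_sq]
  exact integral_norm_expSum_sq _ _

end ExpSum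

theorem sq_le_mul_add_pow_four_div {x s : ℝ} (hx : 0 ≤ x) (hs : 0 < s) :
    x ^ 2 ≤ s * x + x ^ 4 / s ^ 2 := by
  rcases le_total x s with hxs | hsx
  · have : 0 ≤ x ^ 4 / s ^ 2 := by positivity
    nlinarith
  · have : x ^ 2 ≤ x ^ 4 / s ^ 2 := by
      rw [le_div_iff₀ (by positivity)]
      have : s ^ 2 ≤ x ^ 2 := by gcongr
      nlinarith [sq_nonneg x]
    nlinarith

theorem integral_sq_le_mul_integral_add {α : Type*} [MeasurableSpace α] {μ : Measure α}
    {g : α → ℝ} (hg0 : 0 ≤ g) (hg : Integrable g μ) (hg4 : Integrable (fun x => g x ^ 4) μ)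
    {s : ℝ} (hs : 0 < s) :
    ∫ x, g x ^ 2 ∂μ ≤ s * ∫ x, g x ∂μ + (∫ x, g x ^ 4 ∂μ) / s ^ 2 := by
  rw [← integral_const_mul, ← integral_div, ← integral_add (hg.const_mul s) (hg4.div_const _)]
  exact integral_mono_of_nonneg (.of_forall fun x => by positivity)
    ((hg.const_mul s).add (hg4.div_const _))
    (.of_forall fun x => sq_le_mul_add_pow_four_div (hg0 x) hs)

theorem sqrt_div_le_integral_of_integral_pow_four_le {α : Type*} [MeasurableSpace α]
    {μ : Measure α} {g : α → ℝ} (hg0 : 0 ≤ g) (hg : Integrable g μ)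
    (hg4 : Integrable (fun x => g x ^ 4) μ) {M K : ℝ} (hM : 0 < M) (hK : 0 < K)
    (h2 : ∫ x, g x ^ 2 ∂μ = M) (h4 : ∫ x, g x ^ 4 ∂μ ≤ K * M ^ 2) :
    √M / (2 * √(2 * K)) ≤ ∫ x, g x ∂μ := by
  set A := ∫ x, g x ∂μ
  have hsM : 0 < √M := sqrt_pos.2 hM
  have hsK : 0 < √(2 * K) := sqrt_pos.2 (by positivity)
  have hs2 : (√(2 * K) * √M) ^ 2 = 2 * K * M := by
    rw [mul_pow, sq_sqrt (by positivity), sq_sqrt hM.le]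
  -- `s = √(2K) √M` makes the fourth-moment term at most `M / 2`
  have key := integral_sq_le_mul_integral_add hg0 hg hg4 (mul_pos hsK hsM)
  rw [h2, hs2] at key
  have h4' : (∫ x, g x ^ 4 ∂μ) / (2 * K * M) ≤ M / 2 := by
    rw [div_le_iff₀ (by positivity)]
    nlinarith
  have hMA : √M * √M ≤ 2 * (√(2 * K) * √M * A) := by
    rw [mul_self_sqrt hM.le]; linarith
  rw [div_le_iff₀ (by positivity)]
  nlinarith

section Lacunary

variable {q : ℝ} {n : ℕ → ℕ}

theorem lacunary_pow_mul_le (hn : ∀ k, (n (k + 1) : ℝ) ≥ q * n k) (hq : 0 ≤ q) {j k : ℕ}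
    (hjk : j ≤ k) : q ^ (k - j) * n j ≤ n k := by
  induction k, hjk using Nat.le_induction with
  | base => simp
  | succ k hjk ih =>
    calc q ^ (k + 1 - j) * n j = q * (q ^ (k - j) * n j) := by
          rw [Nat.sub_add_comm hjk, pow_succ]; ring
      _ ≤ q * n k := by gcongr
      _ ≤ n (k + 1) := hn k

theorem lacunary_one_le (hn : ∀ k, (n (k + 1) : ℝ) ≥ q * n k) (hq : 1 ≤ q) (h1 : 1 ≤ n 1)
    {k : ℕ} (hk : 1 ≤ k) : 1 ≤ n k := by
  have := lacunary_pow_mul_le hn (by linarith) hk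
  have : (1 : ℝ) ≤ n k := calc
    (1 : ℝ) = 1 * 1 := by norm_num
    _ ≤ q ^ (k - 1) * n 1 := by gcongr; exacts [one_le_pow₀ hq, by exact_mod_cast h1]
    _ ≤ n k := this
  exact_mod_cast this

theorem lacunary_strictMonoOn (hn : ∀ k, (n (k + 1) : ℝ) ≥ q * n k) (hq : 1 < q)
    (h1 : 1 ≤ n 1) : StrictMonoOn n (Set.Ici 1) := by
  intro j hj k _ hjk
  have hnj : (0 : ℝ) < n j := by exact_mod_cast lacunary_one_le hn hq.le h1 hj
  have : (n j : ℝ) < n k := calc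
    (n j : ℝ) < q ^ (k - j) * n j := lt_mul_of_one_lt_left hnj (one_lt_pow₀ hq (by omega))
    _ ≤ n k := lacunary_pow_mul_le hn (by linarith) hjk.le
  exact_mod_cast this

theorem card_le_of_lacunary (hn : ∀ k, (n (k + 1) : ℝ) ≥ q * n k) (hq : 1 < q)
    (h1 : 1 ≤ n 1) {L : ℕ} (hL : 2 < q ^ L) (s : Finset ℕ) (hs1 : ∀ k ∈ s, 1 ≤ k)
    (hs : ∀ j ∈ s, ∀ k ∈ s, n k ≤ 2 * n j) : #s ≤ L := by
  rcases s.eq_empty_or_nonempty with rfl | hne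
  · simp
  set j := s.min' hne
  have hj := s.min'_mem hne
  have hnj : (0 : ℝ) < n j := by exact_mod_cast lacunary_one_le hn hq.le h1 (hs1 j hj)
  have hsub : s ⊆ Ico j (j + L) := by
    intro k hk
    have hjk := s.min'_le k hk
    have hgrowth := lacunary_pow_mul_le hn (by linarith) hjk
    have hratio : (n k : ℝ) ≤ 2 * n j := by exact_mod_cast hs j hj k hk
    have : q ^ (k - j) < q ^ L := by nlinarith
    rw [pow_lt_pow_iff_right₀ hq] at this
    rw [mem_Ico]; omega
  simpa using card_le_card hsub

end Lacunary

section AdditiveQuadruples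

variable {ι : Type*} {s : Finset ι} {n : ι → ℕ}

theorem card_sum_eq_of_snd_le_le_card (hn : Set.InjOn n s) (v : ℕ) :
    #{p ∈ s ×ˢ s | n p.1 + n p.2 = v ∧ n p.2 ≤ n p.1} ≤
      #{k ∈ s | v ≤ 2 * n k ∧ n k ≤ v} := by
  refine card_le_card_of_injOn Prod.fst (fun p hp => ?_) (fun p hp p' hp' h => ?_)
  · simp only [mem_coe, mem_filter, mem_product] at hp ⊢
    exact ⟨hp.1.1, by omega, by omega⟩
  · simp only [mem_coe, mem_filter, mem_product] at hp hp'
    have h2 : p.2 = p'.2 := hn hp.1.2 hp'.1.2 (by rw [h] at hp; omega)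
    exact Prod.ext h h2

theorem card_sum_eq_le_two_mul [DecidableEq ι] (hn : Set.InjOn n s) (v : ℕ) :
    #{p ∈ s ×ˢ s | n p.1 + n p.2 = v} ≤ 2 * #{k ∈ s | v ≤ 2 * n k ∧ n k ≤ v} := by
  set A := {p ∈ s ×ˢ s | n p.1 + n p.2 = v ∧ n p.2 ≤ n p.1}
  have hsub : {p ∈ s ×ˢ s | n p.1 + n p.2 = v} ⊆ A ∪ A.image Prod.swap := by
    intro p hp
    simp only [A, mem_union, mem_image, mem_filter, mem_product] at hp ⊢
    rcases le_total (n p.2) (n p.1) with h | h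
    · exact .inl ⟨hp.1, hp.2, h⟩
    · refine .inr ⟨p.swap, ⟨⟨hp.1.2, hp.1.1⟩, ?_, h⟩, rfl⟩
      simp only [Prod.fst_swap, Prod.snd_swap]
      omega
  calc _ ≤ #(A ∪ A.image Prod.swap) := card_le_card hsub
    _ ≤ #A + #(A.image Prod.swap) := card_union_le _ _
    _ ≤ #A + #A := Nat.add_le_add_left card_image_le _
    _ ≤ _ := by have : #A ≤ _ := card_sum_eq_of_snd_le_le_card hn v; omega

theorem card_additive_quadruples_le [DecidableEq ι] (hn : Set.InjOn n s) (L : ℕ)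
    (hL : ∀ v, #{k ∈ s | v ≤ 2 * n k ∧ n k ≤ v} ≤ L) :
    #{x ∈ (s ×ˢ s) ×ˢ (s ×ˢ s) | n x.1.1 + n x.1.2 = n x.2.1 + n x.2.2} ≤
      2 * L * #s ^ 2 := by
  rw [card_filter, sum_product]
  simp only [← card_filter]
  calc _ ≤ ∑ _ ∈ s ×ˢ s, 2 * L := sum_le_sum fun x _ => by
          rw [filter_congr fun y _ => (eq_comm : n x.1 + n x.2 = _ ↔ _)]
          exact (card_sum_eq_le_two_mul hn _).trans (by gcongr; exact hL _)
    _ = 2 * L * #s ^ 2 := by rw [sum_const, card_product, smul_eq_mul]; ring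

end AdditiveQuadruples

theorem stmt_11 (q : ℝ) (hq : 1 < q) :
    ∃ C : ℝ, 0 < C ∧
      ∀ (N : ℕ), 2 ≤ N →
        ∀ (n : ℕ → ℕ), 1 ≤ n 1 → (∀ k, (n (k + 1) : ℝ) ≥ q * n k) →
          (∫ t in (-(1 / 2) : ℝ)..(1 / 2),
              ‖∑ k ∈ Finset.Icc 1 N, Complex.exp (2 * π * Complex.I * (n k : ℂ) * t)‖)
            ≥ C * Real.sqrt N := by
  obtain ⟨L, hL⟩ := pow_unbounded_of_one_lt (2 : ℝ) hq
  have hL0 : 0 < L := Nat.pos_of_ne_zero (by rintro rfl; norm_num at hL)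
  refine ⟨1 / (2 * √(2 * (2 * L))), by positivity, fun N hN n h1 hn => ?_⟩
  have hinj : Set.InjOn n (Icc 1 N) :=
    (lacunary_strictMonoOn hn hq h1).injOn.mono fun k hk => (mem_Icc.1 hk).1
  set m : ℕ → ℤ := fun k => n k
  have h2 : ∫ t in (-(1 / 2) : ℝ)..(1 / 2), ‖expSum (Icc 1 N) m t‖ ^ 2 = N := by
    rw [integral_norm_expSum_sq_of_injOn _ m (Nat.cast_injective.comp_injOn hinj), Nat.card_Icc,
      Nat.add_sub_cancel]
  have h4 :
      ∫ t in (-(1 / 2) : ℝ)..(1 / 2), ‖expSum (Icc 1 N) m t‖ ^ 4 ≤ 2 * L * (N : ℝ) ^ 2 := by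
    have hcount := card_additive_quadruples_le hinj L fun v =>
      card_le_of_lacunary hn hq h1 hL _ (fun k hk => (mem_Icc.1 (mem_filter.1 hk).1).1)
        fun j hj k hk => by simp only [mem_filter] at hj hk; omega
    rw [Nat.card_Icc, Nat.add_sub_cancel] at hcount
    rw [integral_norm_expSum_pow_four]
    simp only [m, ← Nat.cast_add, Nat.cast_inj]
    exact_mod_cast hcount
  have hg := (continuous_expSum (Icc 1 N) m).norm
  rw [intervalIntegral.integral_of_le (by norm_num)] at h2 h4 ⊢
  have := sqrt_div_le_integral_of_integral_pow_four_le (fun t => norm_nonneg _)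
    hg.integrableOn_Ioc (hg.pow 4).integrableOn_Ioc (by positivity) (by positivity) h2 h4
  simpa [expSum, m, div_eq_inv_mul] using this
end

section
/- Let $I$ be a finite set of integers with $|I| \ge 8$. Then there exist positive integers $q$ and $s$ such that $\frac{|I|^{1/3}}{8} \le |I(q;s)| \le q^{1/2}$, where $I(q;s) = \{k \in I : k \equiv s \pmod q\}$. -/
/-!
Let `j` be least such that every residue class of `I` modulo `4 ^ j` has at most `2 ^ j`
elements; `j ≥ 1` because `|I| > 1`. Covering `I` by the `4 ^ j` classes gives `|I| ≤ 8 ^ j`. By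
minimality some class modulo `4 ^ (j - 1)` has more than `2 ^ (j - 1)` elements, and it splits into
four classes modulo `4 ^ j`, so one of these has at least `2 ^ j / 8 ≥ |I| ^ (1/3) / 8` elements,
and at most `2 ^ j = √(4 ^ j)`.
-/

open Finset

def residueClass (I : Finset ℤ) (q : ℕ) (s : ℤ) : Finset ℤ :=
  I.filter fun k => k % (q : ℤ) = s % (q : ℤ)

section residueClass

variable {I : Finset ℤ} {q : ℕ} {s : ℤ}

theorem mem_residueClass {k : ℤ} : k ∈ residueClass I q s ↔ k ∈ I ∧ k ≡ s [ZMOD q] :=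
  mem_filter

@[simp]
theorem residueClass_one : residueClass I 1 s = I :=
  filter_true_of_mem fun k _ => by simp

theorem residueClass_congr {s' : ℤ} (h : s ≡ s' [ZMOD q]) :
    residueClass I q s = residueClass I q s' := by
  ext k
  simp only [mem_residueClass]
  exact and_congr_right fun _ => ⟨fun hk => hk.trans h, fun hk => hk.trans h.symm⟩

theorem Int.exists_pos_natCast_modEq (hq : 0 < q) (s : ℤ) :
    ∃ n : ℕ, 0 < n ∧ (n : ℤ) ≡ s [ZMOD q] := by
  refine ⟨(s % q).toNat + q, by omega, ?_⟩
  have hs : 0 ≤ s % q := Int.emod_nonneg s (by omega)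
  simp [Int.ModEq, Int.toNat_of_nonneg hs]

theorem Int.exists_lt_modEq_add_mul {m : ℕ} (hm : 0 < m) {k : ℤ} (hk : k ≡ s [ZMOD q]) :
    ∃ t < m, k ≡ s + t * q [ZMOD (m * q : ℕ)] := by
  obtain ⟨d, hd⟩ := Int.modEq_iff_dvd.mp hk.symm
  have hd_nonneg : 0 ≤ d % m := Int.emod_nonneg d (by omega)
  have hd_lt : d % m < m := Int.emod_lt_of_pos d (by omega)
  refine ⟨(d % m).toNat, by omega, (Int.modEq_iff_dvd.mpr ⟨d / m, ?_⟩).symm⟩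
  rw [Int.toNat_of_nonneg hd_nonneg]
  push_cast
  linear_combination hd - (q : ℤ) * Int.emod_add_mul_ediv d m

theorem card_residueClass_le_sum {m : ℕ} (hm : 0 < m) :
    #(residueClass I q s) ≤ ∑ t ∈ range m, #(residueClass I (m * q) (s + t * q)) := by
  refine (card_le_card fun k hk => ?_).trans card_biUnion_le
  obtain ⟨hkI, hks⟩ := mem_residueClass.mp hk
  obtain ⟨t, htm, hkt⟩ := Int.exists_lt_modEq_add_mul hm hks
  exact mem_biUnion.mpr ⟨t, mem_range.mpr htm, mem_residueClass.mpr ⟨hkI, hkt⟩⟩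

theorem exists_card_residueClass_le_mul {m : ℕ} (hm : 0 < m) :
    ∃ r, #(residueClass I q s) ≤ m * #(residueClass I (m * q) r) := by
  obtain ⟨t, -, ht⟩ := exists_le_of_sum_le (s := range m) (nonempty_range_iff.mpr hm.ne')
    (f := fun _ => #(residueClass I q s))
    (g := fun t : ℕ => m * #(residueClass I (m * q) (s + t * q)))
    (by simpa [← mul_sum] using Nat.mul_le_mul_left m (card_residueClass_le_sum hm))
  exact ⟨_, ht⟩

theorem card_le_mul_of_forall_card_residueClass_le (hq : 0 < q) {b : ℕ}
    (h : ∀ s, #(residueClass I q s) ≤ b) : #I ≤ q * b := by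
  have hfiber : ∀ r ∈ I.image (· % (q : ℤ)), #{k ∈ I | k % (q : ℤ) = r} ≤ b := by
    intro r hr
    obtain ⟨k, -, rfl⟩ := mem_image.mp hr
    exact h k
  have himage : I.image (· % (q : ℤ)) ⊆ Ico 0 q := fun r hr => by
    obtain ⟨k, -, rfl⟩ := mem_image.mp hr
    exact mem_Ico.mpr ⟨Int.emod_nonneg k (by omega), Int.emod_lt_of_pos k (by omega)⟩
  calc #I ≤ b * #(I.image (· % (q : ℤ))) := card_le_mul_card_image I b hfiber
    _ ≤ b * q := by grw [card_le_card himage, Int.card_Ico]; simp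
    _ = q * b := mul_comm b q

theorem exists_residueClass_pow_four (hI : 1 < #I) :
    ∃ j s, #I ≤ 8 ^ j ∧ 2 ^ j ≤ 8 * #(residueClass I (4 ^ j) s) ∧
      #(residueClass I (4 ^ j) s) ≤ 2 ^ j := by
  classical
  have hP : ∃ j, ∀ s, #(residueClass I (4 ^ j) s) ≤ 2 ^ j :=
    ⟨#I, fun s => (card_filter_le _ _).trans Nat.lt_two_pow_self.le⟩
  obtain ⟨j, hJ⟩ : ∃ j, Nat.find hP = j + 1 := by
    refine Nat.exists_eq_add_one_of_ne_zero fun h0 => ?_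
    have := Nat.find_spec hP 0
    simp only [h0, pow_zero, residueClass_one] at this
    omega
  have hbound : ∀ s, #(residueClass I (4 ^ (j + 1)) s) ≤ 2 ^ (j + 1) := hJ ▸ Nat.find_spec hP
  obtain ⟨s, hs⟩ := not_forall.mp (Nat.find_min hP (show j < Nat.find hP by omega))
  obtain ⟨r, hr⟩ := exists_card_residueClass_le_mul (I := I) (q := 4 ^ j) (s := s) four_pos
  rw [← pow_succ'] at hr
  refine ⟨j + 1, r, ?_, ?_, hbound r⟩
  · calc #I ≤ 4 ^ (j + 1) * 2 ^ (j + 1) :=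
          card_le_mul_of_forall_card_residueClass_le (by positivity) hbound
      _ = 8 ^ (j + 1) := by rw [← mul_pow]; norm_num
  · rw [pow_succ]
    omega

end residueClass

theorem stmt_14 (I : Finset ℤ) (hI : 8 ≤ I.card) :
    ∃ q s : ℕ, 0 < q ∧ 0 < s ∧
      ((I.card : ℝ) ^ ((1 : ℝ) / 3)) / 8
          ≤ ((I.filter fun k => k % (q : ℤ) = (s : ℤ) % (q : ℤ)).card : ℝ) ∧
      ((I.filter fun k => k % (q : ℤ) = (s : ℤ) % (q : ℤ)).card : ℝ)
          ≤ (q : ℝ) ^ ((1 : ℝ) / 2) := by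
  obtain ⟨j, r, hI8, hlow, hup⟩ := exists_residueClass_pow_four (I := I) (by omega)
  obtain ⟨s, hs, hsr⟩ := Int.exists_pos_natCast_modEq (q := 4 ^ j) (by positivity) r
  refine ⟨4 ^ j, s, by positivity, hs, ?_⟩
  change _ ≤ (#(residueClass I (4 ^ j) s) : ℝ) ∧ (#(residueClass I (4 ^ j) s) : ℝ) ≤ _
  rw [residueClass_congr hsr]
  have hcube : (#I : ℝ) ^ ((1 : ℝ) / 3) ≤ 2 ^ j := by
    rw [one_div, Real.rpow_inv_le_iff_of_pos (by positivity) (by positivity) (by norm_num)]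
    exact_mod_cast (show #I ≤ (2 ^ j) ^ 3 by rwa [← pow_mul, mul_comm, pow_mul])
  refine ⟨?_, ?_⟩
  · rw [div_le_iff₀ (by norm_num)]
    exact hcube.trans (by exact_mod_cast (show 2 ^ j ≤ #(residueClass I (4 ^ j) r) * 8 by omega))
  · rw [one_div, Real.le_rpow_inv_iff_of_pos (by positivity) (by positivity) (by norm_num)]
    exact_mod_cast (show #(residueClass I (4 ^ j) r) ^ 2 ≤ 4 ^ j by
      grw [hup, ← pow_mul, mul_comm, pow_mul]; norm_num)
end

section
/- Let $2 \le M < N$ be integers and define the sequence $K_{M,N}(k) = \frac{1}{M}\sum_{|n| \le M-1,\ |n-k| \le N+M} (1 - |n|/M)$ (the normalized convolution of the indicator of $\{-N-M,\ldots,N+M\}$ with the Fejér coefficients $\mathbb{f}_{M-1}$). Then $K_{M,N}(k) = 1$ for $|k| \le N$, $K_{M,N}(k) = 0$ for $|k| \ge N + 2M$, and $\int_0^1 \left|\sum_{k} K_{M,N}(k) e^{2i\pi k t}\right| dt \le 8\left(2 + \ln(1 + N/M)\right)$. -/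
/-!
For `|k| ≤ N` the window `|n - k| ≤ N + M` covers all Fejér weights, which sum to `M`.
With `z = exp (2πit)`, the symbol `∑ₖ K k zᵏ` factors as `M⁻¹ F(z) D(z)`, where `F` is the Fejér
kernel averaging `D₀, …, D_{M-1}` and `D` the Dirichlet kernel of radius `N + M`: multiplying by
`D` convolves the Fejér coefficients with the indicator of `[-(N+M), N+M]`. On the unit circle
`‖D(z)‖ ≤ min (2(N+M)+1) (2/‖z-1‖)` and `‖F(z)‖ ≤ min M (4/(M‖z-1‖²))`, the latter because
`(z-1)² ∑_{m<M} D_m(z)` telescopes to `z^{M+1} - 2z + z^{1-M}`. Since `‖z-1‖ ≥ 4t` for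
`t ∈ [0, 1/2]`, the integrand is at most `2(N+M)+1`, `1/(2t)` and `1/(8M²t³)` on the ranges cut
at `1/(2(N+M))` and `1/(2M)`, which integrate to `O(1) + log(1 + N/M)/2`; the symmetry
`t ↦ 1 - t` of a real-coefficient symbol doubles this to the integral over `[0, 1]`.
-/

open Real MeasureTheory Finset

theorem sub_one_mul_sum_Icc_zpow {K : Type*} [DivisionRing K] {z : K} (hz : z ≠ 0) {a b : ℤ}
    (hab : a - 1 ≤ b) : (z - 1) * ∑ j ∈ Icc a b, z ^ j = z ^ (b + 1) - z ^ a := by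
  induction b, hab using Int.leInduction with
  | base => simp
  | succ b hb ih =>
    rw [← insert_Icc_right_eq_Icc_add_one (by lia), sum_insert (by simp), mul_add, ih, sub_mul,
      one_mul, ← zpow_one_add₀ hz, add_comm 1]
    abel

theorem sum_range_sum_Icc_eq_sum_nsmul {R : Type*} [AddCommMonoid R] (M : ℕ) (f : ℤ → R) :
    ∑ m ∈ range M, ∑ n ∈ Icc (-(m : ℤ)) m, f n =
      ∑ n ∈ Icc (-(M : ℤ) + 1) (M - 1), (M - n.natAbs) • f n := by
  rw [sum_comm' (t' := Icc (-(M : ℤ) + 1) (M - 1)) (s' := fun n => Ico n.natAbs M)]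
  · simp [Nat.card_Ico]
  · intro m n
    simp only [mem_range, mem_Icc, mem_Ico]
    lia

theorem sum_range_two_mul_add_one (M : ℕ) : ∑ m ∈ range M, (2 * m + 1) = M ^ 2 := by
  induction M with
  | zero => simp
  | succ M ih => rw [sum_range_succ, ih]; ring

noncomputable def dirichletKernel (r : ℕ) (z : ℂ) : ℂ := ∑ j ∈ Icc (-(r : ℤ)) r, z ^ j

-- `fejerKernel M` is the paper's `F_{M-1}`.
noncomputable def fejerKernel (M : ℕ) (z : ℂ) : ℂ := (M : ℂ)⁻¹ * ∑ m ∈ range M, dirichletKernel m z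

theorem sub_one_mul_dirichletKernel {z : ℂ} (hz : z ≠ 0) (r : ℕ) :
    (z - 1) * dirichletKernel r z = z ^ ((r : ℤ) + 1) - z ^ (-(r : ℤ)) :=
  sub_one_mul_sum_Icc_zpow hz (by lia)

theorem dirichletKernel_one (r : ℕ) : dirichletKernel r 1 = 2 * r + 1 := by
  have : #(Icc (-(r : ℤ)) r) = 2 * r + 1 := by simp; lia
  simp [dirichletKernel, this]

theorem norm_dirichletKernel_le_card {z : ℂ} (hz : ‖z‖ = 1) (r : ℕ) :
    ‖dirichletKernel r z‖ ≤ 2 * r + 1 := by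
  calc ‖dirichletKernel r z‖ ≤ ∑ j ∈ Icc (-(r : ℤ)) r, ‖z ^ j‖ := norm_sum_le _ _
    _ = ‖dirichletKernel r 1‖ := by simp [hz, dirichletKernel]
    _ = 2 * r + 1 := by rw [dirichletKernel_one]; norm_cast

theorem norm_dirichletKernel_le {z : ℂ} (hz : ‖z‖ = 1) (hz1 : z ≠ 1) (r : ℕ) :
    ‖dirichletKernel r z‖ ≤ 2 / ‖z - 1‖ := by
  have hz0 : z ≠ 0 := norm_ne_zero_iff.mp (by simp [hz])
  rw [le_div_iff₀ (norm_pos_iff.mpr (sub_ne_zero.mpr hz1)), mul_comm, ← norm_mul,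
    sub_one_mul_dirichletKernel hz0]
  calc _ ≤ ‖z ^ ((r : ℤ) + 1)‖ + ‖z ^ (-(r : ℤ))‖ := norm_sub_le _ _
    _ = 2 := by simp [hz]; norm_num

theorem sum_mul_dirichletKernel {s u : Finset ℤ} {r : ℕ}
    (hsu : ∀ n ∈ s, Icc (n - r) (n + r) ⊆ u) (a : ℤ → ℂ) {z : ℂ} (hz : z ≠ 0) :
    (∑ n ∈ s, a n * z ^ n) * dirichletKernel r z =
      ∑ k ∈ u, (∑ n ∈ s, if |n - k| ≤ r then a n else 0) * z ^ k := by
  simp_rw [sum_mul, ite_mul, zero_mul]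
  rw [sum_comm]
  refine sum_congr rfl fun n hn => ?_
  have hwindow :
      u.filter (fun k => |n - k| ≤ r) = (Icc (-(r : ℤ)) r).map (addLeftEmbedding n) := by
    rw [map_add_left_Icc, ← sub_eq_add_neg]
    ext k
    simp only [mem_filter, mem_Icc, abs_le]
    exact ⟨fun h => by lia, fun h => ⟨hsu n hn (mem_Icc.mpr h), by lia⟩⟩
  rw [← sum_filter, hwindow, sum_map, dirichletKernel, mul_sum]
  refine sum_congr rfl fun j _ => ?_
  rw [addLeftEmbedding_apply, zpow_add₀ hz, mul_assoc]

theorem fejerKernel_eq_sum (M : ℕ) (z : ℂ) :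
    fejerKernel M z =
      ∑ n ∈ Icc (-(M : ℤ) + 1) (M - 1), ((1 - |(n : ℝ)| / M : ℝ) : ℂ) * z ^ n := by
  simp only [fejerKernel, dirichletKernel]
  rw [sum_range_sum_Icc_eq_sum_nsmul, mul_sum]
  refine sum_congr rfl fun n hn => ?_
  have hn : n.natAbs < M := by rw [mem_Icc] at hn; lia
  have hM : (M : ℂ) ≠ 0 := by norm_cast; lia
  have habs : ((|n| : ℤ) : ℂ) = ((|(n : ℝ)| : ℝ) : ℂ) := by
    rw [← Int.cast_abs, Complex.ofReal_intCast]
  rw [nsmul_eq_mul, Nat.cast_sub hn.le, Nat.cast_natAbs, habs]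
  push_cast
  field_simp

theorem fejerKernel_one (M : ℕ) : fejerKernel M 1 = M := by
  rcases eq_or_ne M 0 with rfl | hM
  · simp [fejerKernel]
  rw [fejerKernel]
  simp only [dirichletKernel_one]
  have := congrArg (fun n : ℕ => (n : ℂ)) (sum_range_two_mul_add_one M)
  push_cast at this
  rw [this]
  field_simp

theorem sum_fejerKernel_coeff (M : ℕ) :
    ∑ n ∈ Icc (-(M : ℤ) + 1) (M - 1), (1 - |(n : ℝ)| / M) = M := by
  have := fejerKernel_eq_sum M 1
  rw [fejerKernel_one] at this
  simp only [one_zpow, mul_one] at this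
  exact_mod_cast this.symm

theorem norm_fejerKernel_le {z : ℂ} (hz : ‖z‖ = 1) (M : ℕ) : ‖fejerKernel M z‖ ≤ M := by
  calc ‖fejerKernel M z‖ ≤ (M : ℝ)⁻¹ * ∑ m ∈ range M, ‖dirichletKernel m z‖ := by
        rw [fejerKernel, norm_mul, norm_inv, Complex.norm_natCast]
        gcongr
        exact norm_sum_le _ _
    _ ≤ (M : ℝ)⁻¹ * ∑ m ∈ range M, (2 * m + 1 : ℝ) := by
        gcongr with m
        exact norm_dirichletKernel_le_card hz m
    _ = M := by
        rcases eq_or_ne M 0 with rfl | hM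
        · simp
        have := congrArg (fun n : ℕ => (n : ℝ)) (sum_range_two_mul_add_one M)
        push_cast at this
        rw [this]
        field_simp

theorem sub_one_sq_mul_sum_dirichletKernel {z : ℂ} (hz : z ≠ 0) (M : ℕ) :
    (z - 1) ^ 2 * ∑ m ∈ range M, dirichletKernel m z =
      (z ^ ((M : ℤ) + 1) - z) + (z ^ (1 - (M : ℤ)) - z) := by
  have htel : ∀ m : ℕ, (z - 1) * ((z - 1) * dirichletKernel m z) =
      (z ^ (((m + 1 : ℕ) : ℤ) + 1) - z ^ ((m : ℤ) + 1)) +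
        (z ^ (1 - ((m + 1 : ℕ) : ℤ)) - z ^ (1 - (m : ℤ))) := by
    intro m
    rw [sub_one_mul_dirichletKernel hz]
    push_cast
    rw [show (m : ℤ) + 1 + 1 = 1 + ((m : ℤ) + 1) by ring, show 1 - (m : ℤ) = 1 + -(m : ℤ) by ring,
      show 1 - ((m : ℤ) + 1) = -(m : ℤ) by ring, zpow_one_add₀ hz, zpow_one_add₀ hz]
    ring
  rw [sq, mul_assoc, mul_sum, mul_sum]
  simp only [htel, sum_add_distrib, sum_range_sub (fun m : ℕ => z ^ ((m : ℤ) + 1)),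
    sum_range_sub (fun m : ℕ => z ^ (1 - (m : ℤ)))]
  simp

theorem norm_fejerKernel_le_div {z : ℂ} (hz : ‖z‖ = 1) (hz1 : z ≠ 1) (M : ℕ) :
    ‖fejerKernel M z‖ ≤ 4 / (M * ‖z - 1‖ ^ 2) := by
  have hz0 : z ≠ 0 := norm_ne_zero_iff.mp (by simp [hz])
  have hpos : 0 < ‖z - 1‖ := norm_pos_iff.mpr (sub_ne_zero.mpr hz1)
  have hsum : ‖∑ m ∈ range M, dirichletKernel m z‖ ≤ 4 / ‖z - 1‖ ^ 2 := by
    rw [le_div_iff₀ (by positivity), mul_comm, ← norm_pow, ← norm_mul,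
      sub_one_sq_mul_sum_dirichletKernel hz0]
    calc _ ≤ (‖z ^ ((M : ℤ) + 1)‖ + ‖z‖) + (‖z ^ (1 - (M : ℤ))‖ + ‖z‖) :=
          (norm_add_le _ _).trans (add_le_add (norm_sub_le _ _) (norm_sub_le _ _))
      _ = 4 := by simp [hz]; norm_num
  rw [fejerKernel, norm_mul, norm_inv, Complex.norm_natCast, div_eq_inv_mul, mul_inv,
    mul_assoc, ← div_eq_inv_mul 4]
  gcongr

theorem exp_two_pi_I_int_mul (k : ℤ) (t : ℝ) :
    Complex.exp (2 * π * Complex.I * k * t) = Complex.exp (2 * π * Complex.I * t) ^ k := by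
  rw [← Complex.exp_int_mul]
  ring_nf

theorem norm_exp_two_pi_I_mul (t : ℝ) : ‖Complex.exp (2 * π * Complex.I * t)‖ = 1 := by
  rw [Complex.norm_exp]
  simp

theorem four_mul_le_norm_exp_two_pi_I_mul_sub_one {t : ℝ} (h0 : 0 ≤ t) (h1 : t ≤ 1 / 2) :
    4 * t ≤ ‖Complex.exp (2 * π * Complex.I * t) - 1‖ := by
  have hsin : 2 * t ≤ Real.sin (π * t) := by
    have := mul_le_sin (x := π * t) (by positivity) (by nlinarith [pi_pos])
    rwa [show 2 / π * (π * t) = 2 * t by field_simp] at this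
  have h : 2 * π * Complex.I * t = Complex.I * ((2 * π * t : ℝ) : ℂ) := by push_cast; ring
  rw [h, Complex.norm_exp_I_mul_ofReal_sub_one, show 2 * π * t / 2 = π * t by ring, norm_mul,
    Real.norm_of_nonneg (by linarith)]
  norm_num
  rw [abs_of_nonneg (by linarith)]
  linarith

theorem exp_two_pi_I_mul_one_sub (t : ℝ) :
    Complex.exp (2 * π * Complex.I * (1 - t : ℝ)) =
      (starRingEnd ℂ) (Complex.exp (2 * π * Complex.I * t)) := by
  rw [← Complex.exp_conj, show 2 * π * Complex.I * (1 - t : ℝ) =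
      -(2 * π * Complex.I * t) + 2 * π * Complex.I by push_cast; ring,
    Complex.exp_add, Complex.exp_two_pi_mul_I, mul_one]
  congr 1
  simp [Complex.conj_ofReal, map_ofNat]

theorem norm_sum_exp_two_pi_I_one_sub (s : Finset ℤ) (c : ℤ → ℝ) (t : ℝ) :
    ‖∑ k ∈ s, (c k : ℂ) * Complex.exp (2 * π * Complex.I * k * (1 - t : ℝ))‖ =
      ‖∑ k ∈ s, (c k : ℂ) * Complex.exp (2 * π * Complex.I * k * t)‖ := by
  rw [← RCLike.norm_conj, map_sum]
  congr 1
  refine sum_congr rfl fun k _ => ?_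
  rw [map_mul, Complex.conj_ofReal, exp_two_pi_I_int_mul, exp_two_pi_I_int_mul,
    exp_two_pi_I_mul_one_sub, map_zpow₀, Complex.conj_conj]

theorem integral_zero_one_eq_two_mul_of_symm {f : ℝ → ℝ} (hf : Continuous f)
    (hsymm : ∀ t, f (1 - t) = f t) : ∫ t in (0 : ℝ)..1, f t = 2 * ∫ t in (0 : ℝ)..1 / 2, f t := by
  have hflip : ∫ t in (1 / 2 : ℝ)..1, f t = ∫ t in (0 : ℝ)..1 / 2, f t := by
    have := intervalIntegral.integral_comp_sub_left (a := 1 / 2) (b := 1) f 1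
    simp only [hsymm] at this
    rw [this]
    norm_num
  rw [← intervalIntegral.integral_add_adjacent_intervals (hf.intervalIntegrable 0 (1 / 2))
    (hf.intervalIntegrable _ 1), hflip]
  ring

theorem integral_le_of_three_regime_bounds {f : ℝ → ℝ} (hf : Continuous f)
    {a b c A B C : ℝ} (ha : 0 < a) (hab : a ≤ b) (hbc : b ≤ c) (hC : 0 ≤ C)
    (hfA : ∀ t ∈ Set.Icc 0 a, f t ≤ A) (hfB : ∀ t ∈ Set.Icc a b, f t ≤ B / t)
    (hfC : ∀ t ∈ Set.Icc b c, f t ≤ C / t ^ 3) :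
    ∫ t in (0 : ℝ)..c, f t ≤ A * a + B * log (b / a) + C / (2 * b ^ 2) := by
  have hb : 0 < b := ha.trans_le hab
  have hint : ∀ x y, IntervalIntegrable f volume x y := fun x y => hf.intervalIntegrable x y
  have hA : ∫ t in (0 : ℝ)..a, f t ≤ A * a := by
    simpa [mul_comm] using intervalIntegral.integral_mono_on ha.le (hint 0 a) intervalIntegrable_const hfA
  have hB : ∫ t in a..b, f t ≤ B * log (b / a) := by
    have hcont : ContinuousOn (fun t : ℝ => B / t) (Set.uIcc a b) :=
      continuousOn_const.div continuousOn_id fun t ht => by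
        rw [Set.uIcc_of_le hab] at ht; exact (ha.trans_le ht.1).ne'
    refine (intervalIntegral.integral_mono_on hab (hint a b) hcont.intervalIntegrable hfB).trans
      (le_of_eq ?_)
    simp_rw [div_eq_mul_inv B]
    rw [intervalIntegral.integral_const_mul, integral_inv_of_pos ha hb]
  have hC' : ∫ t in b..c, f t ≤ C / (2 * b ^ 2) := by
    have h0 : (0 : ℝ) ∉ Set.uIcc b c := by
      rw [Set.uIcc_of_le hbc]; exact fun h => hb.not_ge h.1
    have hcont : ContinuousOn (fun t : ℝ => C * t ^ (-3 : ℤ)) (Set.uIcc b c) :=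
      continuousOn_const.mul
        (continuousOn_id.zpow₀ _ fun t ht => Or.inl (ne_of_mem_of_not_mem ht h0))
    refine (intervalIntegral.integral_mono_on hbc (hint b c) hcont.intervalIntegrable
      fun t ht => ?_).trans ?_
    · rw [zpow_neg, zpow_ofNat, ← div_eq_mul_inv]; exact hfC t ht
    rw [intervalIntegral.integral_const_mul, integral_zpow (Or.inr ⟨by norm_num, h0⟩)]
    norm_num
    rw [show C * (((c ^ 2)⁻¹ - (b ^ 2)⁻¹) / -2) = C / (2 * b ^ 2) - C / (2 * c ^ 2) by
      field_simp; ring]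
    linarith [show 0 ≤ C / (2 * c ^ 2) by positivity]
  rw [← intervalIntegral.integral_add_adjacent_intervals (hint 0 a) (hint a c),
    ← intervalIntegral.integral_add_adjacent_intervals (hint a b) (hint b c)]
  linarith

noncomputable def valleePoussinKernel (M N : ℕ) (z : ℂ) : ℂ :=
  (M : ℂ)⁻¹ * (fejerKernel M z * dirichletKernel (N + M) z)

theorem sum_mul_zpow_eq_valleePoussinKernel (M N : ℕ) {K : ℤ → ℝ}
    (hK : ∀ k : ℤ, K k = (1 / M) *
        ∑ n ∈ Finset.Icc (-(M : ℤ) + 1) ((M : ℤ) - 1),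
          (if |n - k| ≤ (N : ℤ) + M then 1 - |(n : ℝ)| / M else 0)) {z : ℂ} (hz : z ≠ 0) :
    ∑ k ∈ Icc (-((N : ℤ) + 2 * M)) ((N : ℤ) + 2 * M), (K k : ℂ) * z ^ k =
      valleePoussinKernel M N z := by
  have hwindow : ∀ n ∈ Icc (-(M : ℤ) + 1) ((M : ℤ) - 1),
      Icc (n - (N + M : ℕ)) (n + (N + M : ℕ)) ⊆ Icc (-((N : ℤ) + 2 * M)) ((N : ℤ) + 2 * M) := by
    intro n hn
    apply Icc_subset_Icc <;> simp only [mem_Icc] at hn <;> push_cast <;> lia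
  rw [valleePoussinKernel, fejerKernel_eq_sum, sum_mul_dirichletKernel hwindow _ hz, mul_sum]
  refine sum_congr rfl fun k _ => ?_
  rw [hK, ← mul_assoc]
  push_cast [apply_ite (fun x : ℝ => (x : ℂ))]
  ring

theorem continuous_norm_valleePoussinKernel_exp (M N : ℕ) :
    Continuous fun t : ℝ => ‖valleePoussinKernel M N (Complex.exp (2 * π * Complex.I * t))‖ := by
  unfold valleePoussinKernel fejerKernel dirichletKernel
  simp_rw [← exp_two_pi_I_int_mul]
  fun_prop

section
variable {M N : ℕ} {z : ℂ}

theorem norm_valleePoussinKernel_le_card (hM : M ≠ 0) (hz : ‖z‖ = 1) :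
    ‖valleePoussinKernel M N z‖ ≤ 2 * (N + M) + 1 := by
  rw [valleePoussinKernel, norm_mul, norm_mul, norm_inv, Complex.norm_natCast]
  calc (M : ℝ)⁻¹ * (‖fejerKernel M z‖ * ‖dirichletKernel (N + M) z‖)
      ≤ (M : ℝ)⁻¹ * (M * (2 * (N + M : ℕ) + 1)) := by
        gcongr
        exacts [norm_fejerKernel_le hz M, norm_dirichletKernel_le_card hz _]
    _ = 2 * (N + M) + 1 := by push_cast; field_simp

theorem norm_valleePoussinKernel_le_div (hM : M ≠ 0) (hz : ‖z‖ = 1) (hz1 : z ≠ 1) :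
    ‖valleePoussinKernel M N z‖ ≤ 2 / ‖z - 1‖ := by
  rw [valleePoussinKernel, norm_mul, norm_mul, norm_inv, Complex.norm_natCast]
  calc (M : ℝ)⁻¹ * (‖fejerKernel M z‖ * ‖dirichletKernel (N + M) z‖)
      ≤ (M : ℝ)⁻¹ * (M * (2 / ‖z - 1‖)) := by
        gcongr
        exacts [norm_fejerKernel_le hz M, norm_dirichletKernel_le hz hz1 _]
    _ = 2 / ‖z - 1‖ := by field_simp

theorem norm_valleePoussinKernel_le_div_pow_three (hz : ‖z‖ = 1) (hz1 : z ≠ 1) :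
    ‖valleePoussinKernel M N z‖ ≤ 8 / (M ^ 2 * ‖z - 1‖ ^ 3) := by
  rw [valleePoussinKernel, norm_mul, norm_mul, norm_inv, Complex.norm_natCast]
  calc (M : ℝ)⁻¹ * (‖fejerKernel M z‖ * ‖dirichletKernel (N + M) z‖)
      ≤ (M : ℝ)⁻¹ * (4 / (M * ‖z - 1‖ ^ 2) * (2 / ‖z - 1‖)) := by
        gcongr
        exacts [norm_fejerKernel_le_div hz hz1 M, norm_dirichletKernel_le hz hz1 _]
    _ = 8 / (M ^ 2 * ‖z - 1‖ ^ 3) := by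
        rcases eq_or_ne M 0 with rfl | hM
        · simp
        field_simp
        ring

theorem integral_norm_valleePoussinKernel_exp_le (hM : M ≠ 0) :
    ∫ t in (0 : ℝ)..1 / 2, ‖valleePoussinKernel M N (Complex.exp (2 * π * Complex.I * t))‖ ≤
      2 + log (1 + N / M) / 2 := by
  have hM1 : (1 : ℝ) ≤ M := by exact_mod_cast Nat.one_le_iff_ne_zero.mpr hM
  have hN : (0 : ℝ) ≤ N := N.cast_nonneg
  have hcircle : ∀ t : ℝ, 0 < t → t ≤ 1 / 2 →
      ‖Complex.exp (2 * π * Complex.I * t)‖ = 1 ∧ Complex.exp (2 * π * Complex.I * t) ≠ 1 ∧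
        4 * t ≤ ‖Complex.exp (2 * π * Complex.I * t) - 1‖ := by
    intro t ht0 ht1
    have h4t := four_mul_le_norm_exp_two_pi_I_mul_sub_one ht0.le ht1
    refine ⟨norm_exp_two_pi_I_mul t, fun h => ?_, h4t⟩
    rw [h, sub_self, norm_zero] at h4t
    linarith
  refine (integral_le_of_three_regime_bounds (continuous_norm_valleePoussinKernel_exp M N)
    (a := 1 / (2 * (N + M))) (b := 1 / (2 * M)) (A := 2 * (N + M) + 1) (B := 1 / 2)
    (C := 1 / (8 * M ^ 2)) (by positivity) ?_ ?_ (by positivity) ?_ ?_ ?_).trans ?_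
  · gcongr; linarith
  · rw [div_le_div_iff₀ (by positivity) (by norm_num)]; linarith
  · exact fun t _ => norm_valleePoussinKernel_le_card hM (norm_exp_two_pi_I_mul t)
  · rintro t ⟨hat, htb⟩
    have ht0 : 0 < t := lt_of_lt_of_le (by positivity) hat
    obtain ⟨hz, hz1, h4t⟩ := hcircle t ht0 (htb.trans (by gcongr; linarith))
    calc _ ≤ 2 / ‖Complex.exp (2 * π * Complex.I * t) - 1‖ :=
          norm_valleePoussinKernel_le_div hM hz hz1
      _ ≤ 2 / (4 * t) := by gcongr
      _ = 1 / 2 / t := by field_simp; ring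
  · rintro t ⟨hbt, ht⟩
    have ht0 : 0 < t := lt_of_lt_of_le (by positivity) hbt
    obtain ⟨hz, hz1, h4t⟩ := hcircle t ht0 ht
    calc _ ≤ 8 / (M ^ 2 * ‖Complex.exp (2 * π * Complex.I * t) - 1‖ ^ 3) :=
          norm_valleePoussinKernel_le_div_pow_three hz hz1
      _ ≤ 8 / (M ^ 2 * (4 * t) ^ 3) := by gcongr
      _ = 1 / (8 * M ^ 2) / t ^ 3 := by field_simp; ring
  · have hba : 1 / (2 * M) / (1 / (2 * (N + M))) = 1 + (N : ℝ) / M := by field_simp; ring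
    have hA : (2 * (N + M) + 1) * (1 / (2 * (N + M))) ≤ (3 / 2 : ℝ) := by
      rw [mul_one_div, div_le_iff₀ (by positivity)]; linarith
    have hC : 1 / (8 * M ^ 2) / (2 * (1 / (2 * M)) ^ 2) = (1 / 4 : ℝ) := by field_simp; ring
    rw [hba, hC]
    linarith
end

theorem stmt_16_general (M N : ℕ) (hM : 2 ≤ M) (K : ℤ → ℝ)
    (hK : ∀ k : ℤ, K k = (1 / M) *
        ∑ n ∈ Finset.Icc (-(M : ℤ) + 1) ((M : ℤ) - 1),
          (if |n - k| ≤ (N : ℤ) + M then 1 - |(n : ℝ)| / M else 0)) :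
    (∀ k : ℤ, |k| ≤ (N : ℤ) → K k = 1) ∧
    (∀ k : ℤ, (N : ℤ) + 2 * M ≤ |k| → K k = 0) ∧
    (∫ t in (0 : ℝ)..1,
        ‖∑ k ∈ Finset.Icc (-((N : ℤ) + 2 * M)) ((N : ℤ) + 2 * M),
            (K k : ℂ) * Complex.exp (2 * π * Complex.I * (k : ℂ) * t)‖)
      ≤ 8 * (2 + Real.log (1 + (N : ℝ) / M)) := by
  have hM0 : M ≠ 0 := by lia
  refine ⟨fun k hk => ?_, fun k hk => ?_, ?_⟩
  · rw [hK, sum_congr rfl fun n hn => if_pos ?_, sum_fejerKernel_coeff]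
    · field_simp
    · rw [mem_Icc] at hn
      rw [abs_le] at hk ⊢
      lia
  · rw [hK, sum_eq_zero fun n hn => if_neg ?_, mul_zero]
    rw [mem_Icc] at hn
    rw [abs_le]
    rcases abs_cases k with ⟨h, _⟩ | ⟨h, _⟩ <;> lia
  · rw [integral_zero_one_eq_two_mul_of_symm (by fun_prop)
      fun t => norm_sum_exp_two_pi_I_one_sub _ _ t]
    simp only [exp_two_pi_I_int_mul,
      sum_mul_zpow_eq_valleePoussinKernel M N hK (Complex.exp_ne_zero _)]
    have hlog : 0 ≤ log (1 + (N : ℝ) / M) := log_nonneg (by simp; positivity)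
    linarith [integral_norm_valleePoussinKernel_exp_le (N := N) hM0]

theorem stmt_16 (M N : ℕ) (hM : 2 ≤ M) (hMN : M < N) (K : ℤ → ℝ)
    (hK : ∀ k : ℤ, K k = (1 / M) *
        ∑ n ∈ Finset.Icc (-(M : ℤ) + 1) ((M : ℤ) - 1),
          (if |n - k| ≤ (N : ℤ) + M then 1 - |(n : ℝ)| / M else 0)) :
    (∀ k : ℤ, |k| ≤ (N : ℤ) → K k = 1) ∧
    (∀ k : ℤ, (N : ℤ) + 2 * M ≤ |k| → K k = 0) ∧
    (∫ t in (0 : ℝ)..1,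
        ‖∑ k ∈ Finset.Icc (-((N : ℤ) + 2 * M)) ((N : ℤ) + 2 * M),
            (K k : ℂ) * Complex.exp (2 * π * Complex.I * (k : ℂ) * t)‖)
      ≤ 8 * (2 + Real.log (1 + (N : ℝ) / M)) :=
  stmt_16_general M N hM K hK
end

section
/- Let $N \ge 1$, $\omega = e^{i\pi/(N+1)}$, $a_j = \omega^{j^2}$, and $P(t) = \sum_{j=0}^N a_j e^{2i\pi j t}$. Then $\int_0^1 |P(t)|^4\,dt = N^2 + O(N^{3/2})$ as $N \to \infty$; more precisely there is an absolute constant $A$ with $\left|\int_0^1 |P(t)|^4 dt - (N+1)^2\right| \le A N^{3/2}$ for all $N \ge 1$. -/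
open Real MeasureTheory Finset

/-!
With `n = N + 1`, expanding `|P|⁴ = |P · conj P|²` and using the orthogonality of the characters
`e ℓ t = exp (2πiℓt)` on `[0, 1]` gives `∫ |P|⁴ = ∑_{|ℓ| < n} |c_ℓ|²`, where `c_ℓ` are the
autocorrelations of the coefficients. For the Gauss coefficients `c_0 = n`, `c_{-ℓ} = conj c_ℓ`, and
for `0 < ℓ < n` the autocorrelation is a geometric sum, so `|c_ℓ|² = sin²(πℓ²/n) / sin²(πℓ/n)`.
This quotient is invariant under `ℓ ↦ n - ℓ`, and for `2ℓ ≤ n` Jordan's inequality bounds it by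
`min (n²/(4ℓ²)) (π²ℓ²/4)`; splitting the sum of this minimum at `ℓ ≈ √n` gives `O(n^{3/2})`.
-/

noncomputable section

namespace NewmanGaussSum

open ComplexConjugate

def e (m : ℤ) (t : ℝ) : ℂ := Complex.exp (2 * π * Complex.I * m * t)

lemma e_add (m m' : ℤ) (t : ℝ) : e (m + m') t = e m t * e m' t := by
  simp only [e, ← Complex.exp_add]; push_cast; ring_nf

lemma conj_e (m : ℤ) (t : ℝ) : conj (e m t) = e (-m) t := by
  simp only [e, ← Complex.exp_conj, map_mul, Complex.conj_I, Complex.conj_ofReal, map_ofNat,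
    map_intCast]
  push_cast; ring_nf

lemma e_sub (m m' : ℤ) (t : ℝ) : e (m - m') t = e m t * conj (e m' t) := by
  rw [conj_e, sub_eq_add_neg, e_add]

lemma continuous_e (m : ℤ) : Continuous (e m) := by
  unfold e; fun_prop

lemma integral_e (m : ℤ) : ∫ t in (0 : ℝ)..1, e m t = if m = 0 then 1 else 0 := by
  split_ifs with hm
  · simp [e, hm]
  have hc : 2 * π * Complex.I * m ≠ 0 := by simp [Real.pi_ne_zero, hm]
  have hperiod : Complex.exp (2 * π * Complex.I * m) = 1 := by
    rw [← Complex.exp_int_mul_two_pi_mul_I m]; ring_nf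
  simp only [e, integral_exp_mul_complex hc, Complex.ofReal_one, Complex.ofReal_zero, mul_one,
    mul_zero, hperiod, Complex.exp_zero, sub_self, zero_div]

theorem integral_norm_sq_sum_e (S : Finset ℤ) (b : ℤ → ℂ) :
    ∫ t in (0 : ℝ)..1, ‖∑ ℓ ∈ S, b ℓ * e ℓ t‖ ^ 2 = ∑ ℓ ∈ S, ‖b ℓ‖ ^ 2 := by
  have hexpand : ∀ t, ((‖∑ ℓ ∈ S, b ℓ * e ℓ t‖ ^ 2 : ℝ) : ℂ) =
      ∑ ℓ ∈ S, ∑ ℓ' ∈ S, b ℓ * conj (b ℓ') * e (ℓ - ℓ') t := by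
    intro t
    rw [Complex.ofReal_pow, ← Complex.mul_conj', map_sum, sum_mul_sum]
    refine sum_congr rfl fun ℓ _ => sum_congr rfl fun ℓ' _ => ?_
    rw [map_mul, e_sub]; ring
  have hcont : ∀ ℓ ℓ', Continuous fun t => b ℓ * conj (b ℓ') * e (ℓ - ℓ') t :=
    fun ℓ ℓ' => continuous_const.mul (continuous_e _)
  apply Complex.ofReal_injective
  rw [← intervalIntegral.integral_ofReal]
  simp only [hexpand]
  rw [intervalIntegral.integral_finsetSum fun ℓ _ =>
    (continuous_finsetSum S fun ℓ' _ => hcont ℓ ℓ').intervalIntegrable _ _]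
  push_cast
  refine sum_congr rfl fun ℓ hℓ => ?_
  simp only [intervalIntegral.integral_finsetSum fun ℓ' _ => (hcont ℓ ℓ').intervalIntegrable _ _,
    intervalIntegral.integral_const_mul, integral_e, sub_eq_zero, mul_ite, mul_one, mul_zero,
    sum_ite_eq, if_pos hℓ, Complex.mul_conj']

def autocorr (a : ℕ → ℂ) (n : ℕ) (ℓ : ℤ) : ℂ :=
  ∑ j ∈ range n, ∑ k ∈ range n, if (j : ℤ) - k = ℓ then a j * conj (a k) else 0

lemma mul_conj_sum_e_eq_sum_autocorr (a : ℕ → ℂ) (n : ℕ) (t : ℝ) :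
    (∑ j ∈ range n, a j * e j t) * conj (∑ j ∈ range n, a j * e j t) =
      ∑ ℓ ∈ Ioo (-n : ℤ) n, autocorr a n ℓ * e ℓ t := by
  rw [map_sum, sum_mul_sum]
  simp only [autocorr, sum_mul, ite_mul, zero_mul]
  rw [eq_comm, sum_comm]
  refine sum_congr rfl fun j hj => ?_
  rw [sum_comm]
  refine sum_congr rfl fun k hk => ?_
  have hjk : (j : ℤ) - k ∈ Ioo (-n : ℤ) n := by
    simp only [mem_range] at hj hk; simp only [mem_Ioo]; omega
  rw [sum_ite_eq, if_pos hjk, map_mul, e_sub]; ring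

theorem integral_norm_pow_four_sum_e (a : ℕ → ℂ) (n : ℕ) :
    ∫ t in (0 : ℝ)..1, ‖∑ j ∈ range n, a j * e j t‖ ^ 4 =
      ∑ ℓ ∈ Ioo (-n : ℤ) n, ‖autocorr a n ℓ‖ ^ 2 := by
  have h : ∀ t, ‖∑ j ∈ range n, a j * e j t‖ ^ 4 =
      ‖∑ ℓ ∈ Ioo (-n : ℤ) n, autocorr a n ℓ * e ℓ t‖ ^ 2 := by
    intro t
    rw [← mul_conj_sum_e_eq_sum_autocorr, norm_mul, Complex.norm_conj]; ring
  simp only [h, integral_norm_sq_sum_e]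

lemma autocorr_neg (a : ℕ → ℂ) (n : ℕ) (ℓ : ℤ) : autocorr a n (-ℓ) = conj (autocorr a n ℓ) := by
  simp only [autocorr, map_sum, apply_ite conj, map_mul, Complex.conj_conj, map_zero]
  rw [sum_comm]
  refine sum_congr rfl fun j _ => sum_congr rfl fun k _ => if_congr (by omega) (mul_comm _ _) rfl

lemma autocorr_natCast (a : ℕ → ℂ) (n ℓ : ℕ) :
    autocorr a n ℓ = ∑ k ∈ range (n - ℓ), a (k + ℓ) * conj (a k) := by
  have hcond : ∀ j k : ℕ, ((j : ℤ) - k = ℓ) ↔ j = k + ℓ := by omega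
  simp only [autocorr, hcond]
  rw [sum_comm]
  simp only [sum_ite_eq', ← sum_filter]
  congr 1
  ext k; simp only [mem_filter, mem_range]; omega

lemma autocorr_zero (a : ℕ → ℂ) (n : ℕ) (ha : ∀ j, ‖a j‖ = 1) : autocorr a n 0 = n := by
  simpa [Complex.mul_conj', ha] using autocorr_natCast a n 0

lemma sum_Ioo_neg_of_even {M : Type*} [AddCommMonoid M] (f : ℤ → M) (hf : ∀ ℓ, f (-ℓ) = f ℓ)
    {n : ℕ} (hn : 0 < n) :
    ∑ ℓ ∈ Ioo (-n : ℤ) n, f ℓ = f 0 + 2 • ∑ ℓ ∈ Ico 1 n, f ℓ := by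
  induction n, hn using Nat.le_induction with
  | base =>
    have h : Ioo (-1 : ℤ) 1 = {0} := by ext ℓ; simp only [mem_Ioo, mem_singleton]; omega
    simp [h]
  | succ n hn ih =>
    have hsplit : Ioo (-(n + 1 : ℕ) : ℤ) (n + 1 : ℕ) =
        insert (-n : ℤ) (insert (n : ℤ) (Ioo (-n : ℤ) n)) := by
      ext ℓ; simp only [mem_Ioo, mem_insert]; omega
    rw [hsplit, sum_insert (by simp only [mem_insert, mem_Ioo]; omega),
      sum_insert (by simp only [mem_Ioo]; omega), ih, sum_Ico_succ_top hn, hf]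
    simp only [smul_add]
    abel

lemma norm_sum_range_exp_sq (θ : ℝ) (hθ : Real.sin (θ / 2) ≠ 0) (m : ℕ) :
    ‖∑ k ∈ range m, Complex.exp (Complex.I * θ) ^ k‖ ^ 2 =
      Real.sin (m * θ / 2) ^ 2 / Real.sin (θ / 2) ^ 2 := by
  have hz : Complex.exp (Complex.I * θ) ≠ 1 := by
    intro h
    have := Complex.norm_exp_I_mul_ofReal_sub_one θ
    rw [h, sub_self, norm_zero, eq_comm, norm_eq_zero] at this
    exact hθ (by linarith)
  rw [geom_sum_eq hz, ← Complex.exp_nat_mul, norm_div, div_pow,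
    show (m : ℂ) * (Complex.I * θ) = Complex.I * (m * θ : ℝ) by push_cast; ring,
    Complex.norm_exp_I_mul_ofReal_sub_one, Complex.norm_exp_I_mul_ofReal_sub_one,
    Real.norm_eq_abs, Real.norm_eq_abs, sq_abs, sq_abs, mul_pow, mul_pow,
    mul_div_mul_left _ _ (by norm_num)]

def gauss (n j : ℕ) : ℂ := Complex.exp (π * Complex.I * (j : ℂ) ^ 2 / n)

lemma norm_gauss (n j : ℕ) : ‖gauss n j‖ = 1 := by
  rw [gauss, show π * Complex.I * (j : ℂ) ^ 2 / n = Complex.I * (π * j ^ 2 / n : ℝ) by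
    push_cast; ring, Complex.norm_exp_I_mul_ofReal]

lemma gauss_add_mul_conj (n k ℓ : ℕ) :
    gauss n (k + ℓ) * conj (gauss n k) =
      Complex.exp (Complex.I * (π * ℓ ^ 2 / n : ℝ)) *
        Complex.exp (Complex.I * (2 * π * ℓ / n : ℝ)) ^ k := by
  simp only [gauss, ← Complex.exp_conj, ← Complex.exp_nat_mul, ← Complex.exp_add, map_div₀,
    map_mul, map_pow, Complex.conj_ofReal, Complex.conj_I, map_natCast]
  congr 1
  push_cast
  ring

theorem norm_autocorr_gauss_sq {n ℓ : ℕ} (hℓ : 0 < ℓ) (hℓn : ℓ < n) :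
    ‖autocorr (gauss n) n ℓ‖ ^ 2 = Real.sin (π * ℓ ^ 2 / n) ^ 2 / Real.sin (π * ℓ / n) ^ 2 := by
  have hn : (0 : ℝ) < n := by exact_mod_cast hℓ.trans hℓn
  have hsin : Real.sin (2 * π * ℓ / n / 2) ≠ 0 := by
    refine (Real.sin_pos_of_pos_of_lt_pi (by positivity) ?_).ne'
    rw [div_lt_iff₀ (by norm_num), div_lt_iff₀ hn]
    have : (ℓ : ℝ) < n := by exact_mod_cast hℓn
    nlinarith [Real.pi_pos]
  simp only [autocorr_natCast, gauss_add_mul_conj, ← mul_sum, norm_mul,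
    Complex.norm_exp_I_mul_ofReal, one_mul]
  rw [norm_sum_range_exp_sq _ hsin, Nat.cast_sub hℓn.le,
    show ((n : ℝ) - ℓ) * (2 * π * ℓ / n) / 2 = ℓ * π - π * ℓ ^ 2 / n by field_simp,
    Real.sin_nat_mul_pi_sub, show 2 * π * ℓ / n / 2 = π * ℓ / n by ring]
  congr 1
  rw [neg_sq, mul_pow, ← pow_mul, Even.neg_one_pow (by simp), one_mul]

lemma sin_sq_div_sin_sq_reflect {n ℓ : ℕ} (hℓn : ℓ < n) :
    Real.sin (π * ((n - ℓ : ℕ) : ℝ) ^ 2 / n) ^ 2 / Real.sin (π * ((n - ℓ : ℕ) : ℝ) / n) ^ 2 =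
      Real.sin (π * ℓ ^ 2 / n) ^ 2 / Real.sin (π * ℓ / n) ^ 2 := by
  have hn : (n : ℝ) ≠ 0 := by exact_mod_cast (by omega : n ≠ 0)
  rw [Nat.cast_sub hℓn.le]
  have hnum : π * ((n : ℝ) - ℓ) ^ 2 / n = π * ℓ ^ 2 / n + ((n - 2 * ℓ : ℤ) : ℝ) * π := by
    push_cast; field_simp; ring
  have hden : π * ((n : ℝ) - ℓ) / n = π - π * ℓ / n := by field_simp
  rw [hnum, hden, Real.sin_add_int_mul_pi, Real.sin_pi_sub, mul_pow, ← zpow_natCast, ← zpow_mul,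
    Even.neg_one_zpow (by simp), one_mul]

def majorant (n s : ℕ) : ℝ := min ((n : ℝ) ^ 2 / (4 * s ^ 2)) (π ^ 2 * s ^ 2 / 4)

lemma majorant_nonneg (n s : ℕ) : 0 ≤ majorant n s := le_min (by positivity) (by positivity)

lemma sin_sq_div_sin_sq_le_majorant {n s : ℕ} (hs : 0 < s) (hsn : 2 * s ≤ n) :
    Real.sin (π * s ^ 2 / n) ^ 2 / Real.sin (π * s / n) ^ 2 ≤ majorant n s := by
  have hs' : (0 : ℝ) < s := by exact_mod_cast hs
  have hn : (0 : ℝ) < n := by exact_mod_cast (by omega : 0 < n)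
  have hsn' : (2 * s : ℝ) ≤ n := by exact_mod_cast hsn
  have hjordan : 2 * s / n ≤ Real.sin (π * s / n) := by
    have harg : π * s / n ≤ π / 2 := by
      rw [div_le_div_iff₀ hn two_pos]; nlinarith [Real.pi_pos]
    calc (2 * s / n : ℝ) = 2 / π * (π * s / n) := by field_simp
      _ ≤ _ := Real.mul_le_sin (by positivity) harg
  have hden : (2 * s / n : ℝ) ^ 2 ≤ Real.sin (π * s / n) ^ 2 :=
    pow_le_pow_left₀ (by positivity) hjordan 2
  refine le_min ?_ ?_
  · calc _ ≤ 1 / (2 * s / n : ℝ) ^ 2 :=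
          div_le_div₀ zero_le_one (Real.sin_sq_le_one _) (by positivity) hden
      _ = (n : ℝ) ^ 2 / (4 * s ^ 2) := by field_simp; ring
  · calc _ ≤ (π * s ^ 2 / n) ^ 2 / (2 * s / n : ℝ) ^ 2 :=
          div_le_div₀ (by positivity) Real.sin_sq_le_sq (by positivity) hden
      _ = π ^ 2 * s ^ 2 / 4 := by field_simp; ring

lemma norm_autocorr_gauss_sq_le {n ℓ : ℕ} (hℓ : 0 < ℓ) (hℓn : ℓ < n) :
    ‖autocorr (gauss n) n ℓ‖ ^ 2 ≤ majorant n ℓ + majorant n (n - ℓ) := by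
  rw [norm_autocorr_gauss_sq hℓ hℓn]
  rcases le_or_gt (2 * ℓ) n with h | h
  · exact le_add_of_le_of_nonneg (sin_sq_div_sin_sq_le_majorant hℓ h) (majorant_nonneg _ _)
  · rw [← sin_sq_div_sin_sq_reflect hℓn]
    exact le_add_of_nonneg_of_le (majorant_nonneg _ _)
      (sin_sq_div_sin_sq_le_majorant (by omega) (by omega))

lemma sum_Icc_majorant_le (n M : ℕ) (hM : (M : ℝ) ≤ √n) :
    ∑ s ∈ Icc 1 M, majorant n s ≤ π ^ 2 / 4 * (n * √n) := by
  have hterm : ∀ s ∈ Icc 1 M, majorant n s ≤ π ^ 2 * M ^ 2 / 4 := by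
    intro s hs
    have : (s : ℝ) ≤ M := by exact_mod_cast (mem_Icc.1 hs).2
    exact (min_le_right _ _).trans (by gcongr)
  calc ∑ s ∈ Icc 1 M, majorant n s ≤ #(Icc 1 M) • (π ^ 2 * M ^ 2 / 4) :=
        sum_le_card_nsmul _ _ _ hterm
    _ = π ^ 2 / 4 * (M : ℝ) ^ 3 := by
        simp only [Nat.card_Icc, add_tsub_cancel_right, nsmul_eq_mul]; ring
    _ ≤ π ^ 2 / 4 * √n ^ 3 := by gcongr
    _ = π ^ 2 / 4 * (n * √n) := by rw [pow_succ _ 2, Real.sq_sqrt (Nat.cast_nonneg n)]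

lemma sum_Ioo_majorant_le (n M : ℕ) (hM : √n ≤ M + 1) :
    ∑ s ∈ Ioo M n, majorant n s ≤ 1 / 2 * (n * √n) := by
  calc ∑ s ∈ Ioo M n, majorant n s ≤ ∑ s ∈ Ioo M n, (n : ℝ) ^ 2 / 4 * ((s : ℝ) ^ 2)⁻¹ :=
        sum_le_sum fun s _ => (min_le_left _ _).trans_eq (by field_simp)
    _ = (n : ℝ) ^ 2 / 4 * ∑ s ∈ Ioo M n, ((s : ℝ) ^ 2)⁻¹ := by rw [mul_sum]
    _ ≤ (n : ℝ) ^ 2 / 4 * (2 / (M + 1)) := by gcongr; exact sum_Ioo_inv_sq_le M n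
    _ ≤ 1 / 2 * (n * √n) := by
        rw [← sub_nonneg]
        have hsq := Real.sq_sqrt (Nat.cast_nonneg (α := ℝ) n)
        have : 0 ≤ (n : ℝ) * √n * (M + 1 - √n) := by
          have := sub_nonneg.2 hM; positivity
        field_simp
        nlinarith

theorem sum_majorant_le (n : ℕ) :
    ∑ s ∈ Ico 1 n, majorant n s ≤ (π ^ 2 / 4 + 1 / 2) * (n * √n) := by
  set M := Nat.sqrt n
  have hsub : Ico 1 n ⊆ Icc 1 M ∪ Ioo M n := by
    intro s; simp only [mem_Ico, mem_union, mem_Icc, mem_Ioo]; omega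
  have hdisj : Disjoint (Icc 1 M) (Ioo M n) := by
    rw [disjoint_left]; intro s; simp only [mem_Icc, mem_Ioo]; omega
  calc ∑ s ∈ Ico 1 n, majorant n s ≤ ∑ s ∈ Icc 1 M ∪ Ioo M n, majorant n s :=
        sum_le_sum_of_subset_of_nonneg hsub fun s _ _ => majorant_nonneg n s
    _ = ∑ s ∈ Icc 1 M, majorant n s + ∑ s ∈ Ioo M n, majorant n s := sum_union hdisj
    _ ≤ π ^ 2 / 4 * (n * √n) + 1 / 2 * (n * √n) :=
        add_le_add (sum_Icc_majorant_le n M Real.nat_sqrt_le_real_sqrt)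
          (sum_Ioo_majorant_le n M Real.real_sqrt_lt_nat_sqrt_succ.le)
    _ = (π ^ 2 / 4 + 1 / 2) * (n * √n) := by ring

lemma sum_norm_autocorr_gauss_sq {n : ℕ} (hn : 0 < n) :
    ∑ ℓ ∈ Ioo (-n : ℤ) n, ‖autocorr (gauss n) n ℓ‖ ^ 2 =
      n ^ 2 + 2 * ∑ ℓ ∈ Ico 1 n, ‖autocorr (gauss n) n ℓ‖ ^ 2 := by
  rw [sum_Ioo_neg_of_even _ (fun ℓ => by rw [autocorr_neg, Complex.norm_conj]) hn,
    autocorr_zero _ _ (norm_gauss n), Complex.norm_natCast, nsmul_eq_mul, Nat.cast_ofNat]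

theorem two_mul_sum_norm_autocorr_gauss_sq_le (n : ℕ) :
    2 * ∑ ℓ ∈ Ico 1 n, ‖autocorr (gauss n) n ℓ‖ ^ 2 ≤ (π ^ 2 + 2) * (n * √n) := by
  calc 2 * ∑ ℓ ∈ Ico 1 n, ‖autocorr (gauss n) n ℓ‖ ^ 2
      ≤ 2 * ∑ ℓ ∈ Ico 1 n, (majorant n ℓ + majorant n (n - ℓ)) := by
        gcongr with ℓ hℓ
        obtain ⟨hℓ1, hℓn⟩ := mem_Ico.1 hℓ
        exact norm_autocorr_gauss_sq_le hℓ1 hℓn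
    _ = 4 * ∑ ℓ ∈ Ico 1 n, majorant n ℓ := by
        rw [sum_add_distrib, sum_Ico_reflect _ _ (by omega), Nat.add_sub_cancel_left,
          add_tsub_cancel_right]
        ring
    _ ≤ 4 * ((π ^ 2 / 4 + 1 / 2) * (n * √n)) := by gcongr; exact sum_majorant_le n
    _ = (π ^ 2 + 2) * (n * √n) := by ring

end NewmanGaussSum

end

theorem stmt_17 :
    ∃ A : ℝ, 0 < A ∧
      ∀ N : ℕ, 1 ≤ N →
        |(∫ t in (0 : ℝ)..1,
            ‖∑ j ∈ Finset.range (N + 1),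
                Complex.exp (π * Complex.I * (j : ℂ) ^ 2 / (N + 1)) *
                  Complex.exp (2 * π * Complex.I * (j : ℂ) * t)‖ ^ 4)
          - ((N : ℝ) + 1) ^ 2| ≤ A * N * Real.sqrt N := by
  refine ⟨4 * (π ^ 2 + 2), by positivity, fun N hN => ?_⟩
  have hP : ∀ t : ℝ, ∑ j ∈ range (N + 1),
      Complex.exp (π * Complex.I * (j : ℂ) ^ 2 / (N + 1)) *
        Complex.exp (2 * π * Complex.I * (j : ℂ) * t) =
      ∑ j ∈ range (N + 1), NewmanGaussSum.gauss (N + 1) j * NewmanGaussSum.e j t := by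
    intro t
    simp only [NewmanGaussSum.gauss, NewmanGaussSum.e, Int.cast_natCast, Nat.cast_add_one]
  have hsqrt : √((N : ℝ) + 1) ≤ 2 * √N := by
    rw [Real.sqrt_le_iff, mul_pow, Real.sq_sqrt (Nat.cast_nonneg N)]
    exact ⟨by positivity, by linarith [(Nat.one_le_cast (α := ℝ)).2 hN]⟩
  have hbound := NewmanGaussSum.two_mul_sum_norm_autocorr_gauss_sq_le (N + 1)
  simp only [hP]
  rw [NewmanGaussSum.integral_norm_pow_four_sum_e,
    NewmanGaussSum.sum_norm_autocorr_gauss_sq N.succ_pos]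
  push_cast at hbound ⊢
  rw [add_sub_cancel_left, abs_of_nonneg (by positivity)]
  calc _ ≤ (π ^ 2 + 2) * (((N : ℝ) + 1) * √((N : ℝ) + 1)) := hbound
    _ ≤ (π ^ 2 + 2) * ((2 * N) * (2 * √N)) := by
        gcongr; linarith [(Nat.one_le_cast (α := ℝ)).2 hN]
    _ = 4 * (π ^ 2 + 2) * N * √N := by ring
end
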